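/- Let Γ ⊂ Homeo(M) be a non-elementary convergence group, d a compatible metric on Γ ⊔ M, and σ : Γ × M → ℝ an expanding κ-coarse-cocycle with magnitude ‖·‖_σ. If γ ∈ Γ is loxodromic, then −κ + limsup_{n→∞} ‖γⁿ‖_σ/n ≤ σ(γ, γ⁺) ≤ κ + liminf_{n→∞} ‖γⁿ‖_σ/n, and moreover σ(γ, γ⁺) > −κ. If γ ∈ Γ is parabolic with fixed point p ∈ M, then −2κ ≤ σ(γ, p) ≤ 4κ. -/

import Mathlib

open Filter Topology MeasureTheory Set

/-! Background definitions: convergence groups, coarse cocycles,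
Patterson–Sullivan measures, following Blayac–Canary–Zhu–Zimmer. -/

/-- The group of self-homeomorphisms of a topological space,
with `(f * g) x = f (g x)`. -/
instance homeomorphGroup {X : Type*} [TopologicalSpace X] : Group (X ≃ₜ X) where
  mul f g := g.trans f
  one := Homeomorph.refl X
  inv := Homeomorph.symm
  mul_assoc f g h := Homeomorph.ext fun _ => rfl
  one_mul f := Homeomorph.ext fun _ => rfl
  mul_one f := Homeomorph.ext fun _ => rfl
  inv_mul_cancel f := Homeomorph.ext fun x => f.symm_apply_apply x

/-- Locally uniform convergence of a sequence of maps to a constant map on a set `S`,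
phrased purely topologically.  (For maps into a uniform space this is equivalent to
`TendstoLocallyUniformlyOn` with constant limit.) -/
def TendstoLocallyUniformlyOnConst {X Y : Type*} [TopologicalSpace X] [TopologicalSpace Y]
    (F : ℕ → X → Y) (a : Y) (S : Set X) : Prop :=
  ∀ U ∈ nhds a, ∀ x ∈ S, ∃ V ∈ nhdsWithin x S, ∀ᶠ n in Filter.atTop, ∀ y ∈ V, F n y ∈ U

variable {M : Type*} [MetricSpace M] [CompactSpace M]

/-- `Γ` is a (discrete) convergence group: every sequence of pairwise distinct elements
has a subsequence converging to a constant map locally uniformly off a point. -/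
def IsConvergenceGroup (Γ : Subgroup (M ≃ₜ M)) : Prop :=
  ∀ γ : ℕ → Γ, Function.Injective γ →
    ∃ (a b : M) (φ : ℕ → ℕ), StrictMono φ ∧
      TendstoLocallyUniformlyOnConst (fun j x => (γ (φ j) : M ≃ₜ M) x) a {b}ᶜ

/-- The limit set of `Γ`. -/
def limitSet (Γ : Subgroup (M ≃ₜ M)) : Set M :=
  {a | ∃ (b : M) (γ : ℕ → Γ),
    TendstoLocallyUniformlyOnConst (fun n x => (γ n : M ≃ₜ M) x) a {b}ᶜ}

/-- `Γ` is non-elementary: its limit set has at least 3 points. -/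
def IsNonElementary (Γ : Subgroup (M ≃ₜ M)) : Prop := 3 ≤ (limitSet Γ).encard

/-- Conical limit points. -/
def IsConicalLimitPoint (Γ : Subgroup (M ≃ₜ M)) (x : M) : Prop :=
  ∃ (a b : M) (γ : ℕ → Γ), a ≠ b ∧
    Tendsto (fun n => (γ n : M ≃ₜ M) x) atTop (nhds a) ∧
    ∀ y : M, y ≠ x → Tendsto (fun n => (γ n : M ≃ₜ M) y) atTop (nhds b)

/-- The conical limit set `Λ^{con}(Γ)`. -/
def conicalLimitSet (Γ : Subgroup (M ≃ₜ M)) : Set M := {x | IsConicalLimitPoint Γ x}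

/-- The natural action of `Γ` on `Γ ⊔ M`. -/
def sumAction (Γ : Subgroup (M ≃ₜ M)) (γ : Γ) : Γ ⊕ M → Γ ⊕ M :=
  Sum.elim (fun α => Sum.inl (γ * α)) (fun x => Sum.inr ((γ : M ≃ₜ M) x))

/-- A compactifying topology on `Γ ⊔ M`: a compact metrizable topology for which the
inclusions of `Γ` (discrete) and `M` are embeddings and the natural `Γ`-action is a
convergence group action. -/
structure IsCompactifyingTopology (Γ : Subgroup (M ≃ₜ M))
    (t : TopologicalSpace (Γ ⊕ M)) : Prop where
  compact : @CompactSpace (Γ ⊕ M) t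
  metrizable : @TopologicalSpace.MetrizableSpace (Γ ⊕ M) t
  isEmbedding_inl : @Topology.IsEmbedding Γ (Γ ⊕ M) ⊥ t Sum.inl
  isEmbedding_inr : @Topology.IsEmbedding M (Γ ⊕ M) _ t Sum.inr
  continuous_action : ∀ γ : Γ, @Continuous (Γ ⊕ M) (Γ ⊕ M) t t (sumAction Γ γ)
  convergence : ∀ γ : ℕ → Γ, Function.Injective γ →
    ∃ (a b : Γ ⊕ M) (φ : ℕ → ℕ), StrictMono φ ∧
      @TendstoLocallyUniformlyOnConst (Γ ⊕ M) (Γ ⊕ M) t t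
        (fun j => sumAction Γ (γ (φ j))) a {b}ᶜ

/-- The distance function of a metric-space structure given as data. -/
def cdist {X : Type*} (m : MetricSpace X) (p q : X) : ℝ := letI := m; dist p q

/-- The topology of a metric-space structure given as data. -/
def ctop {X : Type*} (m : MetricSpace X) : TopologicalSpace X := letI := m; inferInstance

/-- A compatible metric on `Γ ⊔ M`: a metric whose topology is a compactifying topology. -/
def IsCompatibleMetric (Γ : Subgroup (M ≃ₜ M)) (m : MetricSpace (Γ ⊕ M)) : Prop :=
  IsCompactifyingTopology Γ (ctop m)

/-- The shadow `S_ε(γ) = γ (M ∖ B_ε(γ⁻¹))`. -/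
def shadow {Γ : Subgroup (M ≃ₜ M)} (m : MetricSpace (Γ ⊕ M)) (ε : ℝ) (γ : Γ) : Set M :=
  (fun x => (γ : M ≃ₜ M) x) '' {x : M | ε ≤ cdist m (Sum.inr x) (Sum.inl γ⁻¹)}

/-- The `ε`-uniform conical limit set. -/
def uniformConicalLimitSet (Γ : Subgroup (M ≃ₜ M)) (m : MetricSpace (Γ ⊕ M)) (ε : ℝ) :
    Set M :=
  {x | ∃ (a b : M) (γ : ℕ → Γ), ε ≤ cdist m (Sum.inr a) (Sum.inr b) ∧
    Tendsto (fun n => (γ n : M ≃ₜ M) x) atTop (nhds b) ∧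
    ∀ y : M, y ≠ x → Tendsto (fun n => (γ n : M ≃ₜ M) y) atTop (nhds a)}

/-- A `κ`-coarse-cocycle. -/
structure IsCoarseCocycle {Γ : Subgroup (M ≃ₜ M)} (σ : Γ → M → ℝ) (κ : ℝ) : Prop where
  nonneg : 0 ≤ κ
  coarse_cont : ∀ (γ : Γ) (x₀ : M), ∀ ε > 0, ∀ᶠ x in nhds x₀, |σ γ x₀ - σ γ x| < κ + ε
  cocycle : ∀ (γ₁ γ₂ : Γ) (x : M),
    |σ (γ₁ * γ₂) x - (σ γ₁ ((γ₂ : M ≃ₜ M) x) + σ γ₂ x)| ≤ κ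

/-- `γ` is loxodromic with attracting fixed point `p` and repelling fixed point `q`. -/
def IsLoxodromicWith {Γ : Subgroup (M ≃ₜ M)} (γ : Γ) (p q : M) : Prop :=
  p ≠ q ∧ (γ : M ≃ₜ M) p = p ∧ (γ : M ≃ₜ M) q = q ∧
  TendstoLocallyUniformlyOnConst (fun n x => ((γ ^ n : Γ) : M ≃ₜ M) x) p {q}ᶜ ∧
  TendstoLocallyUniformlyOnConst (fun n x => ((γ⁻¹ ^ n : Γ) : M ≃ₜ M) x) q {p}ᶜ

/-- `γ` is parabolic with unique fixed point `p`. -/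
def IsParabolicWith {Γ : Subgroup (M ≃ₜ M)} (γ : Γ) (p : M) : Prop :=
  (γ : M ≃ₜ M) p = p ∧ (∀ q : M, (γ : M ≃ₜ M) q = q → q = p) ∧
  TendstoLocallyUniformlyOnConst (fun n x => ((γ ^ n : Γ) : M ≃ₜ M) x) p {p}ᶜ ∧
  TendstoLocallyUniformlyOnConst (fun n x => ((γ⁻¹ ^ n : Γ) : M ≃ₜ M) x) p {p}ᶜ

/-- A proper coarse-cocycle: `σ(γ_n, γ_n⁺) → +∞` along distinct loxodromic elements
whose fixed-point pairs stay uniformly separated. -/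
def IsProperCocycle {Γ : Subgroup (M ≃ₜ M)} (m : MetricSpace (Γ ⊕ M))
    (σ : Γ → M → ℝ) : Prop :=
  ∀ (γ : ℕ → Γ) (p q : ℕ → M), Function.Injective γ →
    (∀ n, IsLoxodromicWith (γ n) (p n) (q n)) →
    (∃ c > 0, ∀ᶠ n in atTop, c ≤ cdist m (Sum.inr (q n)) (Sum.inr (p n))) →
    Tendsto (fun n => σ (γ n) (p n)) atTop atTop

/-- `σ` is expanding with magnitude function `h = ‖·‖_σ`. -/
def IsExpandingWith {Γ : Subgroup (M ≃ₜ M)} (m : MetricSpace (Γ ⊕ M))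
    (σ : Γ → M → ℝ) (h : Γ → ℝ) : Prop :=
  IsProperCocycle m σ ∧
  ∀ ε > 0, ∃ C > 0, ∀ (γ : Γ) (x : M),
    ε < cdist m (Sum.inr x) (Sum.inl γ⁻¹) → |σ γ x - h γ| ≤ C

/-- An escaping sequence in `Γ`. -/
def IsEscaping {Γ : Subgroup (M ≃ₜ M)} (γ : ℕ → Γ) : Prop :=
  ∀ F : Finset Γ, ∀ᶠ n in atTop, γ n ∉ F

/-- The critical exponent `δ_σ(Γ)` attached to a magnitude function `h = ‖·‖_σ`. -/
noncomputable def critExp {Γ : Subgroup (M ≃ₜ M)} (h : Γ → ℝ) : ℝ :=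
  sInf {s : ℝ | 0 < s ∧ Summable (fun γ : Γ => Real.exp (-s * h γ))}

/-- A `C`-coarse `σ`-Patterson–Sullivan measure of dimension `δ`. -/
def IsCoarsePS [MeasurableSpace M] [BorelSpace M] {Γ : Subgroup (M ≃ₜ M)}
    (σ : Γ → M → ℝ) (C δ : ℝ) (μ : Measure M) : Prop :=
  IsProbabilityMeasure μ ∧ 0 ≤ C ∧
  ∀ γ : Γ,
    Measure.map (γ : M ≃ₜ M) μ ≪ μ ∧ μ ≪ Measure.map (γ : M ≃ₜ M) μ ∧
    ∀ᵐ x ∂μ,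
      Real.exp (-C - δ * σ γ⁻¹ x) ≤ ((Measure.map (γ : M ≃ₜ M) μ).rnDeriv μ x).toReal ∧
      ((Measure.map (γ : M ≃ₜ M) μ).rnDeriv μ x).toReal ≤ Real.exp (C - δ * σ γ⁻¹ x)

/-- A coarse `σ`-Patterson–Sullivan measure of dimension `δ` (for some constant `C`). -/
def IsCoarsePSDim [MeasurableSpace M] [BorelSpace M] {Γ : Subgroup (M ≃ₜ M)}
    (σ : Γ → M → ℝ) (δ : ℝ) (μ : Measure M) : Prop :=
  ∃ C : ℝ, IsCoarsePS σ C δ μ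

/-- A `κ`-coarse Gromov–Patterson–Sullivan system `(σ, σ̄, G)`. -/
structure IsCoarseGPS {Γ : Subgroup (M ≃ₜ M)} (m : MetricSpace (Γ ⊕ M))
    (σ σb : Γ → M → ℝ) (G : M → M → ℝ) (κ : ℝ) : Prop where
  cocycle : IsCoarseCocycle σ κ
  cocycle_bar : IsCoarseCocycle σb κ
  proper : IsProperCocycle m σ
  proper_bar : IsProperCocycle m σb
  locBounded : ∀ x y : M, x ≠ y → ∃ (U V : Set M) (B : ℝ),
    IsOpen U ∧ IsOpen V ∧ x ∈ U ∧ y ∈ V ∧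
    ∀ x' ∈ U, ∀ y' ∈ V, x' ≠ y' → |G x' y'| ≤ B
  compat : ∀ (γ : Γ) (x y : M), x ≠ y →
    |(σb γ x + σ γ y) - (G ((γ : M ≃ₜ M) x) ((γ : M ≃ₜ M) y) - G x y)| ≤ κ

/-- The diagonal action of `Γ` on `M × M`. -/
def prodAct {Γ : Subgroup (M ≃ₜ M)} (γ : Γ) : M × M → M × M :=
  fun p => ((γ : M ≃ₜ M) p.1, (γ : M ≃ₜ M) p.2)

/-- `M^{(2)}`, the set of pairs of distinct points. -/
def offDiag2 (M : Type*) : Set (M × M) := {p : M × M | p.1 ≠ p.2}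

set_option linter.unusedSectionVars false

section CocyclePeriodsAux

open Filter

private lemma tluoc_eval {X Y : Type*} [TopologicalSpace X] [TopologicalSpace Y]
    {F : ℕ → X → Y} {a : Y} {b : X}
    (h : TendstoLocallyUniformlyOnConst F a {b}ᶜ)
    {z : ℕ → X} {z₀ : X} (hz : Tendsto z atTop (nhds z₀)) (hz₀ : z₀ ≠ b)
    (hzb : ∀ᶠ n in atTop, z n ≠ b) :
    Tendsto (fun n => F n (z n)) atTop (nhds a) := by
  rw [Filter.tendsto_def]
  intro U hU
  obtain ⟨V, hV, hVF⟩ := h U hU z₀ hz₀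
  rw [mem_nhdsWithin] at hV
  obtain ⟨O, hO, hz₀O, hOV⟩ := hV
  have h1 : ∀ᶠ n in atTop, z n ∈ O := hz (hO.mem_nhds hz₀O)
  filter_upwards [h1, hzb, hVF] with n hzO hzb' hF
  exact hF _ (hOV ⟨hzO, hzb'⟩)

private lemma tluoc_apply {X Y : Type*} [TopologicalSpace X] [TopologicalSpace Y]
    {F : ℕ → X → Y} {a : Y} {b : X}
    (h : TendstoLocallyUniformlyOnConst F a {b}ᶜ) {x : X} (hx : x ≠ b) :
    Tendsto (fun n => F n x) atTop (nhds a) :=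
  tluoc_eval h tendsto_const_nhds hx (Filter.Eventually.of_forall fun _ => hx)

private lemma tluoc_comp {X Y : Type*} [TopologicalSpace X] [TopologicalSpace Y]
    {F : ℕ → X → Y} {a : Y} {S : Set X}
    (h : TendstoLocallyUniformlyOnConst F a S)
    {ψ : ℕ → ℕ} (hψ : Tendsto ψ atTop atTop) :
    TendstoLocallyUniformlyOnConst (fun j => F (ψ j)) a S := by
  intro U hU x hx
  obtain ⟨V, hV, hVF⟩ := h U hU x hx
  exact ⟨V, hV, hψ.eventually hVF⟩

variable {M : Type*} [MetricSpace M] [CompactSpace M] {Γ : Subgroup (M ≃ₜ M)}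

private lemma coe_mul_apply (γ δ : Γ) (x : M) :
    ((γ * δ : Γ) : M ≃ₜ M) x = (γ : M ≃ₜ M) ((δ : M ≃ₜ M) x) := rfl

private lemma coe_one_apply (x : M) : ((1 : Γ) : M ≃ₜ M) x = x := rfl

private lemma fix_inv {γ : Γ} {p : M} (hp : (γ : M ≃ₜ M) p = p) :
    ((γ⁻¹ : Γ) : M ≃ₜ M) p = p := by
  have : ((γ⁻¹ : Γ) : M ≃ₜ M) ((γ : M ≃ₜ M) p) = p := by
    have h1 : ((γ⁻¹ * γ : Γ) : M ≃ₜ M) p = p := by rw [inv_mul_cancel]; rfl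
    rw [← coe_mul_apply]; exact h1
  rwa [hp] at this

private lemma fix_pow {γ : Γ} {p : M} (hp : (γ : M ≃ₜ M) p = p) :
    ∀ n : ℕ, ((γ ^ n : Γ) : M ≃ₜ M) p = p := by
  intro n
  induction n with
  | zero => rfl
  | succ n ih =>
    rw [pow_succ, coe_mul_apply, hp, ih]

private lemma exists_three (hNE : IsNonElementary Γ) :
    ∃ x y z : M, x ≠ y ∧ x ≠ z ∧ y ≠ z := by
  have h1 : (1 : ℕ∞) < (limitSet Γ).encard := lt_of_lt_of_le (by norm_num) hNE
  obtain ⟨x, y, hx, hy, hxy⟩ := Set.one_lt_encard_iff.mp h1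
  have h2 : (limitSet Γ \ {x, y}).Nonempty := by
    rw [Set.nonempty_iff_ne_empty]
    intro hempty
    have hsub : limitSet Γ ⊆ {x, y} := by
      intro w hw
      by_contra hw2
      exact absurd hempty (Set.nonempty_iff_ne_empty.mp ⟨w, hw, hw2⟩)
    have hle : (limitSet Γ).encard ≤ ({x, y} : Set M).encard := Set.encard_mono hsub
    rw [Set.encard_pair hxy] at hle
    have := le_trans hNE hle
    norm_num at this
  obtain ⟨z, hz⟩ := h2
  refine ⟨x, y, z, hxy, ?_, ?_⟩
  · intro hxz; exact hz.2 (by rw [← hxz]; exact Set.mem_insert _ _)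
  · intro hyz; exact hz.2 (by rw [← hyz]; exact Set.mem_insert_of_mem _ rfl)

private lemma pow_injective {γ : Γ} {p q : M} (hlox : IsLoxodromicWith γ p q)
    {x₀ : M} (hx₀p : x₀ ≠ p) (hx₀q : x₀ ≠ q) :
    Function.Injective (fun n : ℕ => γ ^ n) := by
  have key : ∀ d : ℕ, γ ^ d = 1 → d = 0 := by
    intro d hd
    by_contra hd0
    have hstep : ∀ k : ℕ, ((γ ^ (d * k) : Γ) : M ≃ₜ M) x₀ = x₀ := by
      intro k; rw [pow_mul, hd, one_pow]; rfl
    have h1 : Tendsto (fun j : ℕ => ((γ ^ j : Γ) : M ≃ₜ M) x₀) atTop (nhds p) :=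
      tluoc_apply hlox.2.2.2.1 hx₀q
    have h2 : Tendsto (fun k : ℕ => d * k) atTop atTop :=
      tendsto_atTop_mono (fun k => Nat.le_mul_of_pos_left k (Nat.pos_of_ne_zero hd0)) tendsto_id
    have h3 : Tendsto (fun k : ℕ => ((γ ^ (d * k) : Γ) : M ≃ₜ M) x₀) atTop (nhds p) :=
      h1.comp h2
    have h4 : Tendsto (fun _ : ℕ => x₀) atTop (nhds p) := by
      simpa only [hstep] using h3
    exact hx₀p (tendsto_nhds_unique (tendsto_const_nhds : Tendsto (fun _ : ℕ => x₀) atTop (nhds x₀)) h4)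
  have key2 : ∀ a b : ℕ, a ≤ b → γ ^ a = γ ^ b → a = b := by
    intro a b hab h
    have hb : γ ^ b = γ ^ a * γ ^ (b - a) := by
      rw [← pow_add]; congr 1; omega
    have : γ ^ a * 1 = γ ^ a * γ ^ (b - a) := by
      rw [mul_one, ← hb, h]
    have := key _ (mul_left_cancel this).symm
    omega
  intro a b hab
  simp only at hab
  rcases le_total a b with hle | hle
  · exact key2 a b hle hab
  · exact (key2 b a hle hab.symm).symm

private lemma pow_lox {γ : Γ} {p q : M} (hlox : IsLoxodromicWith γ p q) (n : ℕ) :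
    IsLoxodromicWith (γ ^ (n + 1)) p q := by
  obtain ⟨hpq, hp, hq, h1, h2⟩ := hlox
  have hmul : Tendsto (fun k : ℕ => (n + 1) * k) atTop atTop :=
    tendsto_atTop_mono (fun k => Nat.le_mul_of_pos_left k (Nat.succ_pos n)) tendsto_id
  refine ⟨hpq, fix_pow hp (n + 1), fix_pow hq (n + 1), ?_, ?_⟩
  · have hcomp := tluoc_comp h1 hmul
    have hfun : (fun k (x : M) => ((((γ ^ (n + 1) : Γ)) ^ k : Γ) : M ≃ₜ M) x)
        = fun k (x : M) => ((γ ^ ((n + 1) * k) : Γ) : M ≃ₜ M) x := by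
      funext k x; rw [← pow_mul]
    rw [hfun]
    exact hcomp
  · have hcomp := tluoc_comp h2 hmul
    have hfun : (fun k (x : M) => ((((γ ^ (n + 1) : Γ))⁻¹ ^ k : Γ) : M ≃ₜ M) x)
        = fun k (x : M) => ((γ⁻¹ ^ ((n + 1) * k) : Γ) : M ≃ₜ M) x := by
      funext k x
      have : ((γ ^ (n + 1))⁻¹ : Γ) ^ k = (γ⁻¹ : Γ) ^ ((n + 1) * k) := by
        rw [inv_pow, inv_pow, pow_mul]
      rw [this]
    rw [hfun]
    exact hcomp

private lemma cocycle_pow_bound {σ : Γ → M → ℝ} {κ : ℝ} (hσ : IsCoarseCocycle σ κ)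
    {γ : Γ} {p : M} (hp : (γ : M ≃ₜ M) p = p) :
    ∀ n : ℕ, |σ (γ ^ (n + 1)) p - ((n : ℝ) + 1) * σ γ p| ≤ (n : ℝ) * κ := by
  intro n
  induction n with
  | zero => simp [pow_one]
  | succ n ih =>
    have hfix : ((γ ^ (n + 1) : Γ) : M ≃ₜ M) p = p := fix_pow hp (n + 1)
    have hc := hσ.cocycle γ (γ ^ (n + 1)) p
    rw [hfix] at hc
    have hpow : γ * γ ^ (n + 1) = γ ^ (n + 1 + 1) := (pow_succ' γ (n + 1)).symm
    rw [hpow] at hc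
    rw [abs_le] at hc ih ⊢
    push_cast
    constructor <;> nlinarith [hσ.nonneg]

private lemma far_from_source
    (m : MetricSpace (Γ ⊕ M)) (hm : IsCompatibleMetric Γ m)
    {γ : Γ} {p q : M} (hlox : IsLoxodromicWith γ p q)
    {x₀ : M} (hx₀p : x₀ ≠ p) (hx₀q : x₀ ≠ q)
    (h3 : ∃ x y z : M, x ≠ y ∧ x ≠ z ∧ y ≠ z) :
    ∃ ε > 0, ∀ᶠ n in atTop, ε < cdist m (Sum.inr p) (Sum.inl ((γ ^ n)⁻¹)) := by
  letI := m
  by_contra hcon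
  have hfreq : ∀ k : ℕ, ∃ᶠ n in atTop,
      cdist m (Sum.inr p) (Sum.inl ((γ ^ n)⁻¹)) ≤ 1 / ((k : ℝ) + 1) := by
    intro k
    by_contra hk2
    rw [Filter.not_frequently] at hk2
    refine hcon ⟨1 / ((k : ℝ) + 1), by positivity, hk2.mono fun n hn => lt_of_not_ge hn⟩
  obtain ⟨φ, hφmono, hφ⟩ := Filter.extraction_forall_of_frequently hfreq
  have hinjpow := pow_injective hlox hx₀p hx₀q
  have htend : Tendsto (fun k : ℕ => (Sum.inl ((γ ^ φ k)⁻¹) : Γ ⊕ M)) atTop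
      (nhds (Sum.inr p)) := by
    rw [tendsto_iff_dist_tendsto_zero]
    refine squeeze_zero (fun k => dist_nonneg) (fun k => ?_)
      tendsto_one_div_add_atTop_nhds_zero_nat
    rw [dist_comm]
    exact hφ k
  have hinj : Function.Injective fun k : ℕ => ((γ ^ φ k)⁻¹ : Γ) := by
    intro a b hab
    exact hφmono.injective (hinjpow (inv_injective hab))
  obtain ⟨A, B, ψ, hψmono, hconv⟩ := hm.convergence _ hinj
  have hconv' : TendstoLocallyUniformlyOnConst
      (fun j => sumAction Γ ((γ ^ φ (ψ j))⁻¹)) A {B}ᶜ := hconv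
  obtain ⟨x, y, z, hxy, hxz, hyz⟩ := h3
  have hw : ∃ w : M, w ≠ p ∧ (Sum.inr w : Γ ⊕ M) ≠ B := by
    rcases eq_or_ne x p with hxp | hxp
    · rcases eq_or_ne (Sum.inr y : Γ ⊕ M) B with hyB | hyB
      · refine ⟨z, fun h => hxz (hxp.trans h.symm), fun hzB => ?_⟩
        rw [← hyB] at hzB
        exact hyz (Sum.inr_injective hzB).symm
      · exact ⟨y, fun h => hxy (hxp.trans h.symm), hyB⟩
    · rcases eq_or_ne (Sum.inr x : Γ ⊕ M) B with hxB | hxB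
      · rcases eq_or_ne y p with hyp | hyp
        · exact ⟨z, fun h => hyz (hyp.trans h.symm),
            fun hzB => hxz (Sum.inr_injective (hxB.trans hzB.symm))⟩
        · exact ⟨y, hyp, fun hyB => hxy (Sum.inr_injective (hxB.trans hyB.symm))⟩
      · exact ⟨x, hxp, hxB⟩
  obtain ⟨w, hwp, hwB⟩ := hw
  have hidx : Tendsto (fun j => φ (ψ j)) atTop atTop := (hφmono.comp hψmono).tendsto_atTop
  have hA1 : Tendsto (fun j => sumAction Γ ((γ ^ φ (ψ j))⁻¹) (Sum.inr w)) atTop (nhds A) :=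
    tluoc_apply hconv' hwB
  have hA1' : Tendsto (fun j => (Sum.inr (((γ⁻¹ ^ φ (ψ j) : Γ) : M ≃ₜ M) w) : Γ ⊕ M))
      atTop (nhds A) := by
    have hfun : (fun j => sumAction Γ ((γ ^ φ (ψ j))⁻¹) (Sum.inr w))
        = fun j => (Sum.inr (((γ⁻¹ ^ φ (ψ j) : Γ) : M ≃ₜ M) w) : Γ ⊕ M) := by
      funext j; rw [inv_pow]; rfl
    rwa [hfun] at hA1
  have hA2base : Tendsto (fun n : ℕ => ((γ⁻¹ ^ n : Γ) : M ≃ₜ M) w) atTop (nhds q) :=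
    tluoc_apply hlox.2.2.2.2 hwp
  have hA2 : Tendsto (fun j => (Sum.inr (((γ⁻¹ ^ φ (ψ j) : Γ) : M ≃ₜ M) w) : Γ ⊕ M))
      atTop (nhds (Sum.inr q)) :=
    (hm.isEmbedding_inr.continuous.tendsto q).comp (hA2base.comp hidx)
  have hAq : A = Sum.inr q := tendsto_nhds_unique hA1' hA2
  have hγ1 : (1 : Γ) ≠ γ := by
    intro h1
    have h01 := hinjpow (show γ ^ 0 = γ ^ 1 by rw [pow_zero, pow_one, ← h1])
    simp at h01
  have hδ : ∃ δ : Γ, (Sum.inl δ : Γ ⊕ M) ≠ B ∧ (δ : M ≃ₜ M) q = q ∧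
      ∀ N : ℕ, δ⁻¹ * ((γ ^ N)⁻¹ * δ) = (γ ^ N)⁻¹ := by
    by_cases hB1 : (Sum.inl (1 : Γ) : Γ ⊕ M) = B
    · refine ⟨γ, fun hBγ => ?_, hlox.2.2.1, fun N => by group⟩
      rw [← hBγ] at hB1
      exact hγ1 (Sum.inl_injective hB1)
    · exact ⟨1, hB1, rfl, fun N => by group⟩
  obtain ⟨δ, hδB, hδq, hδcomm⟩ := hδ
  have hD1 : Tendsto (fun j => sumAction Γ ((γ ^ φ (ψ j))⁻¹) (Sum.inl δ)) atTop (nhds A) :=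
    tluoc_apply hconv' hδB
  have hc := (hm.continuous_action δ⁻¹).tendsto A
  have hD2 : Tendsto (fun j => sumAction Γ δ⁻¹ (sumAction Γ ((γ ^ φ (ψ j))⁻¹) (Sum.inl δ)))
      atTop (nhds (sumAction Γ δ⁻¹ A)) := hc.comp hD1
  have hD3 : Tendsto (fun j => (Sum.inl ((γ ^ φ (ψ j))⁻¹) : Γ ⊕ M)) atTop
      (nhds (Sum.inr q)) := by
    have hfun : (fun j => sumAction Γ δ⁻¹ (sumAction Γ ((γ ^ φ (ψ j))⁻¹) (Sum.inl δ)))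
        = fun j => (Sum.inl ((γ ^ φ (ψ j))⁻¹) : Γ ⊕ M) := by
      funext j
      show Sum.inl (δ⁻¹ * ((γ ^ φ (ψ j))⁻¹ * δ)) = _
      rw [hδcomm]
    have hAq2 : sumAction Γ δ⁻¹ A = Sum.inr q := by
      rw [hAq]
      show Sum.inr (((δ⁻¹ : Γ) : M ≃ₜ M) q) = Sum.inr q
      rw [fix_inv hδq]
    rw [hfun, hAq2] at hD2
    exact hD2
  have hD4 : Tendsto (fun j => (Sum.inl ((γ ^ φ (ψ j))⁻¹) : Γ ⊕ M)) atTop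
      (nhds (Sum.inr p)) := htend.comp hψmono.tendsto_atTop
  exact hlox.1 (Sum.inr_injective (tendsto_nhds_unique hD4 hD3))

private lemma tluoc_post {F : ℕ → M → M} {a : M} {S : Set M}
    (h : TendstoLocallyUniformlyOnConst F a S) (ψ : M ≃ₜ M) :
    TendstoLocallyUniformlyOnConst (fun n x => ψ (F n x)) (ψ a) S := by
  intro U hU x hx
  obtain ⟨V, hV, hVF⟩ := h (ψ ⁻¹' U) (ψ.continuous.continuousAt.preimage_mem_nhds hU) x hx
  exact ⟨V, hV, hVF.mono fun n hn y hy => hn y hy⟩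

private lemma tluoc_pre {F : ℕ → M → M} {a : M} {b : M}
    (h : TendstoLocallyUniformlyOnConst F a {b}ᶜ) (ψ : M ≃ₜ M) :
    TendstoLocallyUniformlyOnConst (fun n x => F n (ψ x)) a {ψ.symm b}ᶜ := by
  intro U hU x hx
  have hψx : ψ x ≠ b := by
    intro hh
    exact hx (show x ∈ ({ψ.symm b} : Set M) by
      rw [Set.mem_singleton_iff, ← hh, Homeomorph.symm_apply_apply])
  obtain ⟨V, hV, hVF⟩ := h U hU (ψ x) hψx
  rw [mem_nhdsWithin] at hV
  obtain ⟨O, hO, hxO, hOV⟩ := hV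
  refine ⟨ψ ⁻¹' V, ?_, hVF.mono fun n hn y hy => hn _ hy⟩
  rw [mem_nhdsWithin]
  refine ⟨ψ ⁻¹' O, hO.preimage ψ.continuous, hxO, ?_⟩
  rintro y ⟨hy1, hy2⟩
  refine hOV ⟨hy1, fun hh => ?_⟩
  have hh' : ψ y = b := hh
  exact hy2 (show y ∈ ({ψ.symm b} : Set M) by
    rw [Set.mem_singleton_iff, ← hh', Homeomorph.symm_apply_apply])

private lemma tluoc_unif {F : ℕ → M → M} {a : M} {S : Set M}
    (h : TendstoLocallyUniformlyOnConst F a S) {K : Set M} (hK : IsCompact K) (hKS : K ⊆ S)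
    {U : Set M} (hU : U ∈ nhds a) :
    ∀ᶠ n in atTop, ∀ y ∈ K, F n y ∈ U := by
  have hx : ∀ x ∈ K, ∃ O : Set M, IsOpen O ∧ x ∈ O ∧
      ∀ᶠ n in atTop, ∀ y ∈ O ∩ S, F n y ∈ U := by
    intro x hxK
    obtain ⟨V, hV, hVF⟩ := h U hU x (hKS hxK)
    rw [mem_nhdsWithin] at hV
    obtain ⟨O, hOo, hxO, hOV⟩ := hV
    exact ⟨O, hOo, hxO, hVF.mono fun n hn y hy => hn y (hOV hy)⟩
  choose! O hOo hxO hOF using hx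
  obtain ⟨t, ht⟩ := hK.elim_finite_subcover (fun x : K => O x.1)
    (fun x => hOo x.1 x.2) (fun y hy => Set.mem_iUnion.mpr ⟨⟨y, hy⟩, hxO y hy⟩)
  have hall : ∀ᶠ n in atTop, ∀ i ∈ t, ∀ y ∈ O (i : K).1 ∩ S, F n y ∈ U :=
    (Filter.eventually_all_finset t).mpr fun i _ => hOF i.1 i.2
  refine hall.mono fun n hn y hyK => ?_
  obtain ⟨i, hit, hyO⟩ := Set.mem_iUnion₂.mp (ht hyK)
  exact hn i hit y ⟨hyO, hKS hyK⟩

private lemma pow_injective_tluoc {γ : Γ} {a b : M}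
    (h1 : TendstoLocallyUniformlyOnConst (fun n (x : M) => ((γ ^ n : Γ) : M ≃ₜ M) x) a {b}ᶜ)
    {x₀ : M} (hx₀a : x₀ ≠ a) (hx₀b : x₀ ≠ b) :
    Function.Injective (fun n : ℕ => γ ^ n) := by
  have key : ∀ d : ℕ, γ ^ d = 1 → d = 0 := by
    intro d hd
    by_contra hd0
    have hstep : ∀ k : ℕ, ((γ ^ (d * k) : Γ) : M ≃ₜ M) x₀ = x₀ := by
      intro k; rw [pow_mul, hd, one_pow]; rfl
    have ht1 : Tendsto (fun j : ℕ => ((γ ^ j : Γ) : M ≃ₜ M) x₀) atTop (nhds a) :=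
      tluoc_apply h1 hx₀b
    have ht2 : Tendsto (fun k : ℕ => d * k) atTop atTop :=
      tendsto_atTop_mono (fun k => Nat.le_mul_of_pos_left k (Nat.pos_of_ne_zero hd0)) tendsto_id
    have ht3 : Tendsto (fun k : ℕ => ((γ ^ (d * k) : Γ) : M ≃ₜ M) x₀) atTop (nhds a) :=
      ht1.comp ht2
    have ht4 : Tendsto (fun _ : ℕ => x₀) atTop (nhds a) := by
      simpa only [hstep] using ht3
    exact hx₀a (tendsto_nhds_unique
      (tendsto_const_nhds : Tendsto (fun _ : ℕ => x₀) atTop (nhds x₀)) ht4)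
  have key2 : ∀ a' b' : ℕ, a' ≤ b' → γ ^ a' = γ ^ b' → a' = b' := by
    intro a' b' hab hh
    have hb : γ ^ b' = γ ^ a' * γ ^ (b' - a') := by
      rw [← pow_add]; congr 1; omega
    have hmm : γ ^ a' * 1 = γ ^ a' * γ ^ (b' - a') := by
      rw [mul_one, ← hb, hh]
    have := key _ (mul_left_cancel hmm).symm
    omega
  intro a' b' hab
  simp only at hab
  rcases le_total a' b' with hle | hle
  · exact key2 a' b' hle hab
  · exact (key2 b' a' hle hab.symm).symm

private lemma sigma_bounded {σ : Γ → M → ℝ} {κ : ℝ} (hσ : IsCoarseCocycle σ κ) (f : Γ) :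
    ∃ Bf : ℝ, ∀ x : M, |σ f x| ≤ Bf := by
  have hcov : ∀ x₀ : M, ∃ O : Set M, IsOpen O ∧ x₀ ∈ O ∧
      ∀ x ∈ O, |σ f x| ≤ |σ f x₀| + κ + 1 := by
    intro x₀
    have h1 := hσ.coarse_cont f x₀ 1 one_pos
    rw [Filter.eventually_iff] at h1
    obtain ⟨O, hOsub, hOopen, hx₀O⟩ := mem_nhds_iff.mp h1
    refine ⟨O, hOopen, hx₀O, fun x hx => ?_⟩
    have h2 := hOsub hx
    simp only [Set.mem_setOf_eq] at h2
    have h3 := abs_sub_abs_le_abs_sub (σ f x) (σ f x₀)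
    rw [abs_sub_comm] at h3
    linarith
  choose O hOopen hmem hbound using hcov
  obtain ⟨t, ht⟩ := isCompact_univ.elim_finite_subcover O hOopen
    (fun x _ => Set.mem_iUnion.mpr ⟨x, hmem x⟩)
  refine ⟨∑ x₀ ∈ t, (|σ f x₀| + κ + 1), fun x => ?_⟩
  obtain ⟨x₀, hx₀t, hxO⟩ := Set.mem_iUnion₂.mp (ht (Set.mem_univ x))
  have h1 := hbound x₀ x hxO
  have h2 : |σ f x₀| + κ + 1 ≤ ∑ x₀ ∈ t, (|σ f x₀| + κ + 1) := by
    refine Finset.single_le_sum (f := fun x₀ => |σ f x₀| + κ + 1) (fun i _ => ?_) hx₀t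
    have h4 := abs_nonneg (σ f i)
    have h5 := hσ.nonneg
    show (0:ℝ) ≤ |σ f i| + κ + 1
    linarith
  linarith

private lemma parabolic_inv {g : Γ} {p : M} (hpar : IsParabolicWith g p) :
    IsParabolicWith g⁻¹ p := by
  obtain ⟨hfix, huniq, h1, h2⟩ := hpar
  refine ⟨fix_inv hfix, fun q hq => ?_, h2, ?_⟩
  · apply huniq
    have := fix_inv (γ := g⁻¹) hq
    rwa [inv_inv] at this
  · have hfun : (fun n (x : M) => (((g⁻¹)⁻¹ ^ n : Γ) : M ≃ₜ M) x)
        = fun n (x : M) => ((g ^ n : Γ) : M ≃ₜ M) x := by rw [inv_inv]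
    rw [hfun]
    exact h1

private lemma inl_inv_near
    (m : MetricSpace (Γ ⊕ M)) (hm : IsCompatibleMetric Γ m)
    {γ : Γ} {p' q : M}
    (htl : TendstoLocallyUniformlyOnConst
      (fun n (x : M) => ((γ⁻¹ ^ n : Γ) : M ≃ₜ M) x) q {p'}ᶜ)
    (hq : (γ : M ≃ₜ M) q = q)
    (hinjpow : Function.Injective fun n : ℕ => γ ^ n)
    (h3 : ∃ x y z : M, x ≠ y ∧ x ≠ z ∧ y ≠ z)
    {ε : ℝ} (hε : 0 < ε) :
    ∀ᶠ n in atTop, cdist m (Sum.inr q) (Sum.inl ((γ ^ n)⁻¹)) < ε := by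
  letI := m
  by_contra hcon
  rw [Filter.not_eventually] at hcon
  obtain ⟨φ, hφmono, hφ⟩ := Filter.extraction_of_frequently_atTop hcon
  have hinj : Function.Injective fun k : ℕ => ((γ ^ φ k)⁻¹ : Γ) := by
    intro a b hab
    exact hφmono.injective (hinjpow (inv_injective hab))
  obtain ⟨A, B, ψ, hψmono, hconv⟩ := hm.convergence _ hinj
  have hconv' : TendstoLocallyUniformlyOnConst
      (fun j => sumAction Γ ((γ ^ φ (ψ j))⁻¹)) A {B}ᶜ := hconv
  obtain ⟨x, y, z, hxy, hxz, hyz⟩ := h3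
  have hw : ∃ w : M, w ≠ p' ∧ (Sum.inr w : Γ ⊕ M) ≠ B := by
    rcases eq_or_ne x p' with hxp | hxp
    · rcases eq_or_ne (Sum.inr y : Γ ⊕ M) B with hyB | hyB
      · refine ⟨z, fun hh => hxz (hxp.trans hh.symm), fun hzB => ?_⟩
        rw [← hyB] at hzB
        exact hyz (Sum.inr_injective hzB).symm
      · exact ⟨y, fun hh => hxy (hxp.trans hh.symm), hyB⟩
    · rcases eq_or_ne (Sum.inr x : Γ ⊕ M) B with hxB | hxB
      · rcases eq_or_ne y p' with hyp | hyp
        · exact ⟨z, fun hh => hyz (hyp.trans hh.symm),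
            fun hzB => hxz (Sum.inr_injective (hxB.trans hzB.symm))⟩
        · exact ⟨y, hyp, fun hyB => hxy (Sum.inr_injective (hxB.trans hyB.symm))⟩
      · exact ⟨x, hxp, hxB⟩
  obtain ⟨w, hwp, hwB⟩ := hw
  have hidx : Tendsto (fun j => φ (ψ j)) atTop atTop := (hφmono.comp hψmono).tendsto_atTop
  have hA1 : Tendsto (fun j => sumAction Γ ((γ ^ φ (ψ j))⁻¹) (Sum.inr w)) atTop (nhds A) :=
    tluoc_apply hconv' hwB
  have hA1' : Tendsto (fun j => (Sum.inr (((γ⁻¹ ^ φ (ψ j) : Γ) : M ≃ₜ M) w) : Γ ⊕ M))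
      atTop (nhds A) := by
    have hfun : (fun j => sumAction Γ ((γ ^ φ (ψ j))⁻¹) (Sum.inr w))
        = fun j => (Sum.inr (((γ⁻¹ ^ φ (ψ j) : Γ) : M ≃ₜ M) w) : Γ ⊕ M) := by
      funext j; rw [inv_pow]; rfl
    rwa [hfun] at hA1
  have hA2base : Tendsto (fun n : ℕ => ((γ⁻¹ ^ n : Γ) : M ≃ₜ M) w) atTop (nhds q) :=
    tluoc_apply htl hwp
  have hA2 : Tendsto (fun j => (Sum.inr (((γ⁻¹ ^ φ (ψ j) : Γ) : M ≃ₜ M) w) : Γ ⊕ M))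
      atTop (nhds (Sum.inr q)) :=
    (hm.isEmbedding_inr.continuous.tendsto q).comp (hA2base.comp hidx)
  have hAq : A = Sum.inr q := tendsto_nhds_unique hA1' hA2
  have hγ1 : (1 : Γ) ≠ γ := by
    intro h1
    have h01 := hinjpow (show γ ^ 0 = γ ^ 1 by rw [pow_zero, pow_one, ← h1])
    simp at h01
  have hδ : ∃ δ : Γ, (Sum.inl δ : Γ ⊕ M) ≠ B ∧ (δ : M ≃ₜ M) q = q ∧
      ∀ N : ℕ, δ⁻¹ * ((γ ^ N)⁻¹ * δ) = (γ ^ N)⁻¹ := by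
    by_cases hB1 : (Sum.inl (1 : Γ) : Γ ⊕ M) = B
    · refine ⟨γ, fun hBγ => ?_, hq, fun N => by group⟩
      rw [← hBγ] at hB1
      exact hγ1 (Sum.inl_injective hB1)
    · exact ⟨1, hB1, rfl, fun N => by group⟩
  obtain ⟨δ, hδB, hδq, hδcomm⟩ := hδ
  have hD1 : Tendsto (fun j => sumAction Γ ((γ ^ φ (ψ j))⁻¹) (Sum.inl δ)) atTop (nhds A) :=
    tluoc_apply hconv' hδB
  have hc := (hm.continuous_action δ⁻¹).tendsto A
  have hD2 : Tendsto (fun j => sumAction Γ δ⁻¹ (sumAction Γ ((γ ^ φ (ψ j))⁻¹) (Sum.inl δ)))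
      atTop (nhds (sumAction Γ δ⁻¹ A)) := hc.comp hD1
  have hD3 : Tendsto (fun j => (Sum.inl ((γ ^ φ (ψ j))⁻¹) : Γ ⊕ M)) atTop
      (nhds (Sum.inr q)) := by
    have hfun : (fun j => sumAction Γ δ⁻¹ (sumAction Γ ((γ ^ φ (ψ j))⁻¹) (Sum.inl δ)))
        = fun j => (Sum.inl ((γ ^ φ (ψ j))⁻¹) : Γ ⊕ M) := by
      funext j
      show Sum.inl (δ⁻¹ * ((γ ^ φ (ψ j))⁻¹ * δ)) = _
      rw [hδcomm]
    have hAq2 : sumAction Γ δ⁻¹ A = Sum.inr q := by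
      rw [hAq]
      show Sum.inr (((δ⁻¹ : Γ) : M ≃ₜ M) q) = Sum.inr q
      rw [fix_inv hδq]
    rw [hfun, hAq2] at hD2
    exact hD2
  rw [Metric.tendsto_nhds] at hD3
  obtain ⟨j, hj⟩ := (hD3 ε hε).exists
  exact hφ (ψ j) (by rw [dist_comm] at hj; exact hj)

private lemma pp_extract {B₁ B₂ : Set M} (hB₂c : IsClosed B₂)
    (hdisj : ∀ x ∈ B₁, x ∉ B₂) (hB₁compact : IsCompact B₁)
    (hz₀ : ∃ z₀, z₀ ∉ B₁ ∧ z₀ ∉ B₂)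
    (g : ℕ → Γ) (hg : ∀ j y, y ∉ B₁ → (g j : M ≃ₜ M) y ∈ B₂)
    {A B' : M}
    (htl : TendstoLocallyUniformlyOnConst (fun j (x : M) => (g j : M ≃ₜ M) x) A {B'}ᶜ) :
    B' ∈ B₁ ∧ A ∈ B₂ := by
  obtain ⟨z₀, hz₀B₁, hz₀B₂⟩ := hz₀
  have hstep1 : B' ∈ B₁ := by
    by_contra hB'
    have hzstar : ∃ zs : M, zs ∉ B₂ ∧ zs ≠ A := by
      by_cases hz₀A : z₀ = A
      · refine ⟨(((g 0)⁻¹ : Γ) : M ≃ₜ M) z₀, ?_, ?_⟩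
        · have hw : (((g 0)⁻¹ : Γ) : M ≃ₜ M) z₀ ∈ B₁ := by
            by_contra hc
            have h1 := hg 0 _ hc
            have h2 : (g 0 : M ≃ₜ M) ((((g 0)⁻¹ : Γ) : M ≃ₜ M) z₀) = z₀ := by
              rw [← coe_mul_apply, mul_inv_cancel, coe_one_apply]
            rw [h2] at h1
            exact hz₀B₂ h1
          exact hdisj _ hw
        · intro hh
          rw [← hz₀A] at hh
          have hw : (((g 0)⁻¹ : Γ) : M ≃ₜ M) z₀ ∈ B₁ := by
            by_contra hc
            have h1 := hg 0 _ hc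
            have h2 : (g 0 : M ≃ₜ M) ((((g 0)⁻¹ : Γ) : M ≃ₜ M) z₀) = z₀ := by
              rw [← coe_mul_apply, mul_inv_cancel, coe_one_apply]
            rw [h2] at h1
            exact hz₀B₂ h1
          rw [hh] at hw
          exact hz₀B₁ hw
      · exact ⟨z₀, hz₀B₂, hz₀A⟩
    obtain ⟨zs, hzsB₂, hzsA⟩ := hzstar
    have hUnhds : ({zs} : Set M)ᶜ ∈ nhds A :=
      isOpen_compl_singleton.mem_nhds (Set.mem_compl_singleton_iff.mpr (Ne.symm hzsA))
    have hsub : B₁ ⊆ ({B'} : Set M)ᶜ := fun x hx =>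
      Set.mem_compl_singleton_iff.mpr (fun hh => hB' (hh ▸ hx))
    have huge := tluoc_unif htl hB₁compact hsub hUnhds
    obtain ⟨j, hj⟩ := huge.exists
    set ys := (((g j)⁻¹ : Γ) : M ≃ₜ M) zs with hys
    have hzs : (g j : M ≃ₜ M) ys = zs := by
      rw [hys, ← coe_mul_apply, mul_inv_cancel, coe_one_apply]
    by_cases hysB₁ : ys ∈ B₁
    · have := hj ys hysB₁
      rw [hzs] at this
      exact this rfl
    · have := hg j ys hysB₁
      rw [hzs] at this
      exact hzsB₂ this
  refine ⟨hstep1, ?_⟩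
  set x₂ := (g 0 : M ≃ₜ M) z₀ with hx₂
  have hx₂B₂ : x₂ ∈ B₂ := hg 0 z₀ hz₀B₁
  have hx₂B' : x₂ ≠ B' := fun hh => hdisj B' hstep1 (hh ▸ hx₂B₂)
  have htend := tluoc_apply htl hx₂B'
  refine hB₂c.mem_of_tendsto htend (Filter.Eventually.of_forall fun j => ?_)
  exact hg j x₂ fun hc => hdisj x₂ hc hx₂B₂

private lemma pp_fixed {B₁ B₂ : Set M} (hdisj : ∀ x ∈ B₁, x ∉ B₂)
    {γ : Γ} (hmaps : ∀ y, y ∉ B₁ → (γ : M ≃ₜ M) y ∈ B₂)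
    {e : ℕ → ℕ} {A B' : M}
    (htl : TendstoLocallyUniformlyOnConst
      (fun j (x : M) => ((γ ^ (e j + 1) : Γ) : M ≃ₜ M) x) A {B'}ᶜ)
    (hB' : B' ∈ B₁) (hz₀ : ∃ z₀, z₀ ∉ B₁ ∧ z₀ ∉ B₂) :
    (γ : M ≃ₜ M) A = A := by
  obtain ⟨z₀, hz₀B₁, hz₀B₂⟩ := hz₀
  set x₂ := (γ : M ≃ₜ M) z₀ with hx₂
  have hx₂B₂ : x₂ ∈ B₂ := hmaps z₀ hz₀B₁
  have hx₂B₁ : x₂ ∉ B₁ := fun hc => hdisj x₂ hc hx₂B₂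
  have hγx₂B₂ : (γ : M ≃ₜ M) x₂ ∈ B₂ := hmaps x₂ hx₂B₁
  have hx₂B' : x₂ ≠ B' := fun hh => hdisj B' hB' (hh ▸ hx₂B₂)
  have hγx₂B' : (γ : M ≃ₜ M) x₂ ≠ B' := fun hh => hdisj B' hB' (hh ▸ hγx₂B₂)
  have h1 := tluoc_apply htl hx₂B'
  have h2 := tluoc_apply htl hγx₂B'
  have h3 : (fun j => ((γ ^ (e j + 1) : Γ) : M ≃ₜ M) ((γ : M ≃ₜ M) x₂))
      = fun j => (γ : M ≃ₜ M) (((γ ^ (e j + 1) : Γ) : M ≃ₜ M) x₂) := by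
    funext j
    have hcomm : (γ ^ (e j + 1) : Γ) * γ = γ * γ ^ (e j + 1) := by
      rw [← pow_succ, ← pow_succ']
    calc ((γ ^ (e j + 1) : Γ) : M ≃ₜ M) ((γ : M ≃ₜ M) x₂)
        = ((γ ^ (e j + 1) * γ : Γ) : M ≃ₜ M) x₂ := (coe_mul_apply _ _ _).symm
      _ = ((γ * γ ^ (e j + 1) : Γ) : M ≃ₜ M) x₂ := by rw [hcomm]
      _ = (γ : M ≃ₜ M) (((γ ^ (e j + 1) : Γ) : M ≃ₜ M) x₂) := coe_mul_apply _ _ _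
  rw [h3] at h2
  have h4 : Tendsto (fun j => (γ : M ≃ₜ M) (((γ ^ (e j + 1) : Γ) : M ≃ₜ M) x₂)) atTop
      (nhds ((γ : M ≃ₜ M) A)) := ((γ : M ≃ₜ M).continuous.tendsto A).comp h1
  exact tendsto_nhds_unique h4 h2

private lemma pp_half (hΓ : IsConvergenceGroup Γ)
    {γ : Γ} {B₁ B₂ : Set M} (hB₁c : IsClosed B₁) (hB₂c : IsClosed B₂)
    (hdisj : ∀ x ∈ B₁, x ∉ B₂)
    (hz₀ : ∃ z₀, z₀ ∉ B₁ ∧ z₀ ∉ B₂)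
    (hmaps : ∀ y, y ∉ B₁ → (γ : M ≃ₜ M) y ∈ B₂) :
    ∃ a ∈ B₂, (γ : M ≃ₜ M) a = a ∧ (∀ x ∈ B₂, (γ : M ≃ₜ M) x = x → x = a) ∧
      ∀ U ∈ nhds a, ∀ᶠ n in atTop, ∀ y, y ∉ B₁ → ((γ ^ (n + 1) : Γ) : M ≃ₜ M) y ∈ U := by
  obtain ⟨z₀, hz₀B₁, hz₀B₂⟩ := hz₀
  have hpow : ∀ k : ℕ, ∀ y, y ∉ B₁ → ((γ ^ (k + 1) : Γ) : M ≃ₜ M) y ∈ B₂ := by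
    intro k
    induction k with
    | zero => intro y hy; rw [pow_one]; exact hmaps y hy
    | succ k ih =>
      intro y hy
      have h1 := ih y hy
      have h2 : ((γ ^ (k + 1 + 1) : Γ) : M ≃ₜ M) y
          = (γ : M ≃ₜ M) (((γ ^ (k + 1) : Γ) : M ≃ₜ M) y) := by
        rw [pow_succ', coe_mul_apply]
      rw [h2]
      exact hmaps _ fun hc => hdisj _ hc h1
  have hinj : Function.Injective (fun n : ℕ => γ ^ n) := by
    have key : ∀ d : ℕ, γ ^ d = 1 → d = 0 := by
      intro d hd
      by_contra hd0
      obtain ⟨k, rfl⟩ : ∃ k, d = k + 1 := ⟨d - 1, by omega⟩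
      have hthis := hpow k z₀ hz₀B₁
      rw [hd] at hthis
      rw [show ((1 : Γ) : M ≃ₜ M) z₀ = z₀ from rfl] at hthis
      exact hz₀B₂ hthis
    have key2 : ∀ a' b' : ℕ, a' ≤ b' → γ ^ a' = γ ^ b' → a' = b' := by
      intro a' b' hab hh
      have hb : γ ^ b' = γ ^ a' * γ ^ (b' - a') := by
        rw [← pow_add]; congr 1; omega
      have hmm : γ ^ a' * 1 = γ ^ a' * γ ^ (b' - a') := by
        rw [mul_one, ← hb, hh]
      have := key _ (mul_left_cancel hmm).symm
      omega
    intro a' b' hab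
    simp only at hab
    rcases le_total a' b' with hle | hle
    · exact key2 a' b' hle hab
    · exact (key2 b' a' hle hab.symm).symm
  obtain ⟨a, b, φ₀, hφ₀, htl₀⟩ := hΓ (fun k => γ ^ (k + 1)) (fun i j hij => by
    have := hinj (hij : γ ^ (i + 1) = γ ^ (j + 1)); omega)
  have hext₀ := pp_extract hB₂c hdisj hB₁c.isCompact ⟨z₀, hz₀B₁, hz₀B₂⟩
    (fun j => γ ^ (φ₀ j + 1)) (fun j => hpow (φ₀ j)) htl₀
  obtain ⟨hbB₁, haB₂⟩ := hext₀
  have hafix : (γ : M ≃ₜ M) a = a :=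
    pp_fixed hdisj hmaps (e := fun j => φ₀ j) htl₀ hbB₁ ⟨z₀, hz₀B₁, hz₀B₂⟩
  have hauniq : ∀ x ∈ B₂, (γ : M ≃ₜ M) x = x → x = a := by
    intro x hxB₂ hxfix
    have hxb : x ≠ b := fun hh => hdisj b hbB₁ (hh ▸ hxB₂)
    have h1 := tluoc_apply htl₀ hxb
    have h2 : ∀ j, ((γ ^ (φ₀ j + 1) : Γ) : M ≃ₜ M) x = x := fun j => fix_pow hxfix _
    have h3 : Tendsto (fun _ : ℕ => x) atTop (nhds a) := by
      simpa only [h2] using h1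
    exact tendsto_nhds_unique
      (tendsto_const_nhds : Tendsto (fun _ : ℕ => x) atTop (nhds x)) h3
  refine ⟨a, haB₂, hafix, hauniq, ?_⟩
  by_contra hcon
  push_neg at hcon
  obtain ⟨U, hU, hbad⟩ := hcon
  have hbad : ∃ᶠ n in atTop, ¬ ∀ y, y ∉ B₁ → ((γ ^ (n + 1) : Γ) : M ≃ₜ M) y ∈ U :=
    hbad.mono fun n hn => by push_neg; exact hn
  obtain ⟨φ₁, hφ₁, hP⟩ := Filter.extraction_of_frequently_atTop hbad
  have hP' : ∀ i, ∃ y, y ∉ B₁ ∧ ((γ ^ (φ₁ i + 1) : Γ) : M ≃ₜ M) y ∉ U := by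
    intro i
    by_contra hc
    push_neg at hc
    exact hP i fun y hy => hc y hy
  choose Y hY1 hY2 using hP'
  have hZB₂ : ∀ i, (γ : M ≃ₜ M) (Y i) ∈ B₂ := fun i => hmaps _ (hY1 i)
  have hZnotU : ∀ i, ((γ ^ φ₁ i : Γ) : M ≃ₜ M) ((γ : M ≃ₜ M) (Y i)) ∉ U := by
    intro i hc
    apply hY2 i
    have hthis : ((γ ^ (φ₁ i + 1) : Γ) : M ≃ₜ M) (Y i)
        = ((γ ^ φ₁ i : Γ) : M ≃ₜ M) ((γ : M ≃ₜ M) (Y i)) := by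
      rw [← coe_mul_apply, ← pow_succ]
    rwa [hthis]
  have hinj2 : Function.Injective fun i : ℕ => γ ^ φ₁ (i + 1) := by
    intro i j hij
    have h1 := hinj (hij : γ ^ φ₁ (i + 1) = γ ^ φ₁ (j + 1))
    have h2 := hφ₁.injective h1
    omega
  obtain ⟨A', B', ψ', hψ', htl₁⟩ := hΓ (fun i => γ ^ φ₁ (i + 1)) hinj2
  have hge : ∀ j, 1 ≤ φ₁ (ψ' j + 1) := fun j =>
    le_trans (by omega) (hφ₁.le_apply : ψ' j + 1 ≤ φ₁ (ψ' j + 1))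
  have hmap₁ : ∀ j y, y ∉ B₁ → ((γ ^ φ₁ (ψ' j + 1) : Γ) : M ≃ₜ M) y ∈ B₂ := by
    intro j y hy
    have h1 := hpow (φ₁ (ψ' j + 1) - 1) y hy
    have h2 : φ₁ (ψ' j + 1) - 1 + 1 = φ₁ (ψ' j + 1) := by
      have := hge j; omega
    rwa [h2] at h1
  have hext₁ := pp_extract hB₂c hdisj hB₁c.isCompact ⟨z₀, hz₀B₁, hz₀B₂⟩
    (fun j => γ ^ φ₁ (ψ' j + 1)) hmap₁ htl₁
  obtain ⟨hB'B₁, hA'B₂⟩ := hext₁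
  have htl₁' : TendstoLocallyUniformlyOnConst
      (fun j (x : M) => ((γ ^ (φ₁ (ψ' j + 1) - 1 + 1) : Γ) : M ≃ₜ M) x) A' {B'}ᶜ := by
    have hfun : (fun j (x : M) => ((γ ^ (φ₁ (ψ' j + 1) - 1 + 1) : Γ) : M ≃ₜ M) x)
        = fun j (x : M) => ((γ ^ φ₁ (ψ' j + 1) : Γ) : M ≃ₜ M) x := by
      funext j x
      have h2 : φ₁ (ψ' j + 1) - 1 + 1 = φ₁ (ψ' j + 1) := by
        have := hge j; omega
      rw [h2]
    rw [hfun]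
    exact htl₁
  have hA'fix := pp_fixed hdisj hmaps (e := fun j => φ₁ (ψ' j + 1) - 1) htl₁' hB'B₁
    ⟨z₀, hz₀B₁, hz₀B₂⟩
  have hA'a : A' = a := hauniq A' hA'B₂ hA'fix
  have hB₂sub : B₂ ⊆ ({B'} : Set M)ᶜ := fun x hx =>
    Set.mem_compl_singleton_iff.mpr fun hh => hdisj B' hB'B₁ (hh ▸ hx)
  have hUA' : U ∈ nhds A' := by rw [hA'a]; exact hU
  have huge := tluoc_unif htl₁ hB₂c.isCompact hB₂sub hUA'
  obtain ⟨j, hj⟩ := huge.exists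
  exact hZnotU (ψ' j + 1) (hj _ (hZB₂ (ψ' j + 1)))

private lemma pp_assemble {γ : Γ} {B₁ B₂ : Set M} {a b : M}
    (hdisj : ∀ x ∈ B₁, x ∉ B₂) (haB₂ : a ∈ B₂) (hbB₁ : b ∈ B₁)
    (hfwd : ∀ U ∈ nhds a, ∀ᶠ n in atTop, ∀ y, y ∉ B₁ → ((γ ^ (n + 1) : Γ) : M ≃ₜ M) y ∈ U)
    (hbwd : ∀ U ∈ nhds b, ∀ᶠ n in atTop, ∀ y, y ∉ B₂ → ((γ⁻¹ ^ (n + 1) : Γ) : M ≃ₜ M) y ∈ U) :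
    TendstoLocallyUniformlyOnConst (fun n (x : M) => ((γ ^ n : Γ) : M ≃ₜ M) x) a {b}ᶜ := by
  intro U hU x hx
  have hxb : x ≠ b := hx
  have hrpos : 0 < dist x b / 2 := by
    have := dist_pos.mpr hxb
    linarith
  set r := dist x b / 2 with hrdef
  obtain ⟨M₁, hM₁⟩ := (hbwd (Metric.ball b r) (Metric.ball_mem_nhds b hrpos)).exists
  obtain ⟨M₀, hM₀⟩ := Filter.eventually_atTop.mp (hfwd U hU)
  refine ⟨(Metric.closedBall b r)ᶜ, ?_, ?_⟩
  · rw [mem_nhdsWithin]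
    refine ⟨(Metric.closedBall b r)ᶜ, Metric.isClosed_closedBall.isOpen_compl, ?_, fun y hy => hy.1⟩
    rw [Set.mem_compl_iff, Metric.mem_closedBall]
    push_neg
    have := dist_pos.mpr hxb
    rw [hrdef]
    linarith
  · rw [Filter.eventually_atTop]
    refine ⟨M₀ + M₁ + 2, fun n hn y hy => ?_⟩
    show ((γ ^ n : Γ) : M ≃ₜ M) y ∈ U
    have hyball : y ∉ Metric.ball b r := fun hyb => hy (Metric.ball_subset_closedBall hyb)
    have hw : ((γ ^ (M₁ + 1) : Γ) : M ≃ₜ M) y ∈ B₂ := by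
      by_contra hc
      have h1 := hM₁ _ hc
      have hid : ((γ⁻¹ ^ (M₁ + 1) : Γ) : M ≃ₜ M) (((γ ^ (M₁ + 1) : Γ) : M ≃ₜ M) y) = y := by
        rw [← coe_mul_apply, inv_pow, inv_mul_cancel, coe_one_apply]
      rw [hid] at h1
      exact hyball h1
    set k := n - M₁ - 2 with hk
    have hkM₀ : M₀ ≤ k := by omega
    have hn' : n = k + 1 + (M₁ + 1) := by omega
    have hdec : ((γ ^ n : Γ) : M ≃ₜ M) y
        = ((γ ^ (k + 1) : Γ) : M ≃ₜ M) (((γ ^ (M₁ + 1) : Γ) : M ≃ₜ M) y) := by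
      rw [← coe_mul_apply, ← pow_add, ← hn']
    rw [hdec]
    exact hM₀ k hkM₀ _ fun hc => hdisj _ hc hw

private lemma ping_pong (hΓ : IsConvergenceGroup Γ)
    {γ : Γ} {B₁ B₂ : Set M} (hB₁c : IsClosed B₁) (hB₂c : IsClosed B₂)
    (hdisj : ∀ x ∈ B₁, x ∉ B₂)
    (hz₀ : ∃ z₀, z₀ ∉ B₁ ∧ z₀ ∉ B₂)
    (hmaps : ∀ y, y ∉ B₁ → (γ : M ≃ₜ M) y ∈ B₂) :
    ∃ a ∈ B₂, ∃ b ∈ B₁, IsLoxodromicWith γ a b := by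
  obtain ⟨z₀, hz₀B₁, hz₀B₂⟩ := hz₀
  have hdisj' : ∀ x ∈ B₂, x ∉ B₁ := fun x hx h1 => hdisj x h1 hx
  have hmaps' : ∀ y, y ∉ B₂ → ((γ⁻¹ : Γ) : M ≃ₜ M) y ∈ B₁ := by
    intro y hy
    by_contra hc
    have h1 := hmaps _ hc
    have h2 : (γ : M ≃ₜ M) (((γ⁻¹ : Γ) : M ≃ₜ M) y) = y := by
      rw [← coe_mul_apply, mul_inv_cancel, coe_one_apply]
    rw [h2] at h1
    exact hy h1
  obtain ⟨a, haB₂, hafix, hauniq, hfwd⟩ :=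
    pp_half hΓ hB₁c hB₂c hdisj ⟨z₀, hz₀B₁, hz₀B₂⟩ hmaps
  obtain ⟨b, hbB₁, hbfix', hbuniq', hbwd⟩ :=
    pp_half hΓ hB₂c hB₁c hdisj' ⟨z₀, hz₀B₂, hz₀B₁⟩ hmaps'
  have hbfix : (γ : M ≃ₜ M) b = b := by
    have := fix_inv (γ := γ⁻¹) hbfix'
    rwa [inv_inv] at this
  have hab : a ≠ b := fun hh => hdisj b hbB₁ (hh ▸ haB₂)
  have hfwd' : ∀ U ∈ nhds a, ∀ᶠ n in atTop, ∀ y, y ∉ B₁ →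
      (((γ⁻¹)⁻¹ ^ (n + 1) : Γ) : M ≃ₜ M) y ∈ U := by
    intro U hU
    refine (hfwd U hU).mono fun n hn y hy => ?_
    rw [inv_inv]
    exact hn y hy
  refine ⟨a, haB₂, b, hbB₁, hab, hafix, hbfix, ?_, ?_⟩
  · exact pp_assemble hdisj haB₂ hbB₁ hfwd hbwd
  · exact pp_assemble (γ := γ⁻¹) hdisj' hbB₁ haB₂ hbwd hfwd'

private lemma parabolic_lower
    (hΓ : IsConvergenceGroup Γ) (hNE : IsNonElementary Γ)
    (m : MetricSpace (Γ ⊕ M)) (hm : IsCompatibleMetric Γ m)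
    {σ : Γ → M → ℝ} {κ : ℝ} (hσ : IsCoarseCocycle σ κ)
    {h : Γ → ℝ} (hexp : IsExpandingWith m σ h)
    {g : Γ} {p : M} (hpar : IsParabolicWith g p)
    {f : Γ} (hf : (f : M ≃ₜ M) p ≠ p) :
    -(2 * κ) ≤ σ g p := by
  obtain ⟨hgfix, hguniq, hgfwd, hgbwd⟩ := hpar
  obtain ⟨x, y, z, hxy, hxz, hyz⟩ := exists_three hNE
  have hx₀ : ∃ x₀ : M, x₀ ≠ p := by
    rcases eq_or_ne x p with hxp | hxp
    · exact ⟨y, fun hh => hxy (hxp.trans hh.symm)⟩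
    · exact ⟨x, hxp⟩
  obtain ⟨x₀, hx₀p⟩ := hx₀
  have hinjg : Function.Injective (fun n : ℕ => g ^ n) :=
    pow_injective_tluoc hgfwd hx₀p hx₀p
  have hnear : ∀ ε > 0, ∀ᶠ n in atTop,
      cdist m (Sum.inr p) (Sum.inl ((g ^ n)⁻¹)) < ε :=
    fun ε hε => inl_inv_near m hm hgbwd hgfix hinjg ⟨x, y, z, hxy, hxz, hyz⟩ hε
  letI := m
  have hcd : ∀ a b : Γ ⊕ M, cdist m a b = dist a b := fun _ _ => rfl
  set w := ((f⁻¹ : Γ) : M ≃ₜ M) p with hwdef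
  have hwp : w ≠ p := by
    intro hh
    have h2 : ((f⁻¹ : Γ) : M ≃ₜ M) p = p := hh
    have h3 := fix_inv (γ := f⁻¹) h2
    rw [inv_inv] at h3
    exact hf h3
  have hz₀ex : ∃ z₀ : M, z₀ ≠ p ∧ z₀ ≠ w := by
    rcases eq_or_ne x p with hxp | hxp
    · rcases eq_or_ne y w with hyw | hyw
      · exact ⟨z, fun hh => hxz (hxp.trans hh.symm), fun hh => hyz (hyw.trans hh.symm)⟩
      · exact ⟨y, fun hh => hxy (hxp.trans hh.symm), hyw⟩
    · rcases eq_or_ne x w with hxw | hxw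
      · rcases eq_or_ne y p with hyp | hyp
        · exact ⟨z, fun hh => hyz (hyp.trans hh.symm), fun hh => hxz (hxw.trans hh.symm)⟩
        · exact ⟨y, hyp, fun hh => hxy (hxw.trans hh.symm)⟩
      · exact ⟨x, hxp, hxw⟩
  obtain ⟨z₀, hz₀p, hz₀w⟩ := hz₀ex
  have hpw : 0 < dist p w := dist_pos.mpr (Ne.symm hwp)
  have hz₀pd : 0 < dist z₀ p := dist_pos.mpr hz₀p
  have hz₀wd : 0 < dist z₀ w := dist_pos.mpr hz₀w
  set r := min (min (dist p w / 3) (dist z₀ p)) (dist z₀ w) / 2 with hrdef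
  have hrpos : 0 < r := by
    rw [hrdef]
    have := lt_min (lt_min (by linarith : (0:ℝ) < dist p w / 3) hz₀pd) hz₀wd
    linarith
  have h2r : 2 * r ≤ dist p w / 3 := by
    rw [hrdef]
    have h4 : min (min (dist p w / 3) (dist z₀ p)) (dist z₀ w) ≤ dist p w / 3 :=
      le_trans (min_le_left _ _) (min_le_left _ _)
    linarith
  have hz₀r1 : z₀ ∉ Metric.closedBall w r := by
    rw [Metric.mem_closedBall]
    push_neg
    have h4 : min (min (dist p w / 3) (dist z₀ p)) (dist z₀ w) ≤ dist z₀ w :=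
      min_le_right _ _
    rw [hrdef]; linarith
  have hz₀r2 : z₀ ∉ Metric.closedBall p r := by
    rw [Metric.mem_closedBall]
    push_neg
    have h4 : min (min (dist p w / 3) (dist z₀ p)) (dist z₀ w) ≤ dist z₀ p :=
      le_trans (min_le_left _ _) (min_le_right _ _)
    rw [hrdef]; linarith
  have hdisjB : ∀ x' ∈ Metric.closedBall w r, x' ∉ Metric.closedBall p r := by
    intro x' h1 h2
    rw [Metric.mem_closedBall] at h1 h2
    have h5 := dist_triangle p x' w
    rw [dist_comm p x'] at h5
    linarith
  have hwnotp : w ∉ Metric.closedBall p r := by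
    rw [Metric.mem_closedBall]
    push_neg
    rw [dist_comm]
    linarith
  -- loxodromic sequence β n = g^(n+1) * f
  have hsucc : Tendsto (fun n : ℕ => n + 1) atTop atTop := tendsto_add_atTop_nat 1
  have hfwd1 : TendstoLocallyUniformlyOnConst
      (fun n (x' : M) => ((g ^ (n + 1) : Γ) : M ≃ₜ M) x') p {p}ᶜ := tluoc_comp hgfwd hsucc
  have hbwd1 : TendstoLocallyUniformlyOnConst
      (fun n (x' : M) => ((g⁻¹ ^ (n + 1) : Γ) : M ≃ₜ M) x') p {p}ᶜ := tluoc_comp hgbwd hsucc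
  have hfwdβ : TendstoLocallyUniformlyOnConst
      (fun n (x' : M) => ((g ^ (n + 1) * f : Γ) : M ≃ₜ M) x') p {w}ᶜ := by
    have h1 := tluoc_pre hfwd1 (f : M ≃ₜ M)
    have hsymm : (f : M ≃ₜ M).symm p = w := rfl
    rw [hsymm] at h1
    exact h1
  have hbwdβ : TendstoLocallyUniformlyOnConst
      (fun n (x' : M) => (((g ^ (n + 1) * f)⁻¹ : Γ) : M ≃ₜ M) x') w {p}ᶜ := by
    have h1 := tluoc_post hbwd1 ((f⁻¹ : Γ) : M ≃ₜ M)
    have hfun : (fun n (x' : M) => (((g ^ (n + 1) * f)⁻¹ : Γ) : M ≃ₜ M) x')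
        = fun n (x' : M) => (((f⁻¹ : Γ)) : M ≃ₜ M) (((g⁻¹ ^ (n + 1) : Γ) : M ≃ₜ M) x') := by
      funext n x'
      rw [mul_inv_rev, inv_pow, coe_mul_apply]
    rw [hfun]
    have hwv : ((f⁻¹ : Γ) : M ≃ₜ M) p = w := rfl
    rw [← hwv]
    exact h1
  have hKU := tluoc_unif hfwdβ (Metric.isOpen_ball.isClosed_compl.isCompact)
    (fun x' hx' => (fun hh => hx' (by rw [hh]; exact Metric.mem_ball_self hrpos)))
    (Metric.ball_mem_nhds p hrpos)
  obtain ⟨N₁, hN₁⟩ := Filter.eventually_atTop.mp hKU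
  have hlox : ∀ n : ℕ, ∃ a ∈ Metric.closedBall p r, ∃ b ∈ Metric.closedBall w r,
      IsLoxodromicWith (g ^ (N₁ + n + 1) * f) a b := by
    intro n
    apply ping_pong hΓ Metric.isClosed_closedBall Metric.isClosed_closedBall hdisjB
      ⟨z₀, hz₀r1, hz₀r2⟩
    intro y' hy'
    have h1 : y' ∈ (Metric.ball w r)ᶜ := fun hc => hy' (Metric.ball_subset_closedBall hc)
    have h2 := hN₁ (N₁ + n) (by omega) y' h1
    exact Metric.ball_subset_closedBall h2
  choose! A hA Bq hBq hloxAB using hlox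
  have hinjβ : Function.Injective fun n : ℕ => g ^ (N₁ + n + 1) * f := by
    intro i j hij
    have h1 : g ^ (N₁ + i + 1) = g ^ (N₁ + j + 1) := mul_right_cancel hij
    have := hinjg h1
    omega
  have hsep : ∃ c > 0, ∀ᶠ n : ℕ in atTop,
      c ≤ cdist m (Sum.inr (Bq n)) (Sum.inr (A n)) := by
    have hcomp : IsCompact (Metric.closedBall w r ×ˢ Metric.closedBall p r) :=
      Metric.isClosed_closedBall.isCompact.prod Metric.isClosed_closedBall.isCompact
    have hne : (Metric.closedBall w r ×ˢ Metric.closedBall p r).Nonempty :=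
      ⟨(w, p), Metric.mem_closedBall_self (le_of_lt hrpos),
        Metric.mem_closedBall_self (le_of_lt hrpos)⟩
    have hcont : ContinuousOn (fun q : M × M => dist (Sum.inr q.1 : Γ ⊕ M) (Sum.inr q.2))
        (Metric.closedBall w r ×ˢ Metric.closedBall p r) :=
      (Continuous.dist (hm.isEmbedding_inr.continuous.comp continuous_fst)
        (hm.isEmbedding_inr.continuous.comp continuous_snd)).continuousOn
    obtain ⟨q₀, hq₀mem, hq₀min⟩ := hcomp.exists_isMinOn hne hcont
    refine ⟨dist (Sum.inr q₀.1 : Γ ⊕ M) (Sum.inr q₀.2), ?_, ?_⟩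
    · refine dist_pos.mpr fun hh => ?_
      have hq₀ne : q₀.1 ≠ q₀.2 := fun hh2 =>
        hdisjB q₀.1 hq₀mem.1 (hh2 ▸ hq₀mem.2)
      exact hq₀ne (Sum.inr_injective hh)
    · refine Filter.Eventually.of_forall fun n => ?_
      rw [hcd]
      exact hq₀min (Set.mk_mem_prod (hBq n) (hA n))
  have htendβ := hexp.1 _ A Bq hinjβ hloxAB hsep
  obtain ⟨Bf, hBf⟩ := sigma_bounded hσ f
  have hcoc : ∀ n : ℕ, σ (g ^ (N₁ + n + 1) * f) (A n) - κ - Bf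
      ≤ σ (g ^ (N₁ + n + 1)) ((f : M ≃ₜ M) (A n)) := by
    intro n
    have h1 := hσ.cocycle (g ^ (N₁ + n + 1)) f (A n)
    have h2 := hBf (A n)
    rw [abs_le] at h1 h2
    linarith [h1.1, h1.2, h2.1, h2.2]
  have hKf : IsCompact ((f : M ≃ₜ M) '' Metric.closedBall p r) :=
    Metric.isClosed_closedBall.isCompact.image (f : M ≃ₜ M).continuous
  have hpKf : p ∉ (f : M ≃ₜ M) '' Metric.closedBall p r := by
    rintro ⟨u, hu, hup⟩
    have huw : u = w := by
      rw [hwdef, ← hup, ← coe_mul_apply, inv_mul_cancel, coe_one_apply]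
    rw [huw] at hu
    exact hwnotp hu
  have hc₂ex : ∃ c₂ > 0, ∀ u ∈ (f : M ≃ₜ M) '' Metric.closedBall p r,
      c₂ ≤ dist (Sum.inr u : Γ ⊕ M) (Sum.inr p) := by
    by_cases hKfne : ((f : M ≃ₜ M) '' Metric.closedBall p r).Nonempty
    · have hcont : ContinuousOn (fun u : M => dist (Sum.inr u : Γ ⊕ M) (Sum.inr p))
          ((f : M ≃ₜ M) '' Metric.closedBall p r) :=
        (Continuous.dist hm.isEmbedding_inr.continuous continuous_const).continuousOn
      obtain ⟨u₀, hu₀mem, hu₀min⟩ := hKf.exists_isMinOn hKfne hcont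
      refine ⟨dist (Sum.inr u₀ : Γ ⊕ M) (Sum.inr p), ?_, fun u hu => hu₀min hu⟩
      refine dist_pos.mpr fun hh => ?_
      exact hpKf (Sum.inr_injective hh ▸ hu₀mem)
    · exact ⟨1, one_pos, fun u hu =>
        absurd (⟨u, hu⟩ : ((f : M ≃ₜ M) '' Metric.closedBall p r).Nonempty) hKfne⟩
  obtain ⟨c₂, hc₂pos, hc₂⟩ := hc₂ex
  obtain ⟨C₂, hC₂pos, hC₂⟩ := hexp.2 (c₂ / 2) (by linarith)
  have hidx : Tendsto (fun n : ℕ => N₁ + n + 1) atTop atTop :=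
    tendsto_atTop_mono (fun n => le_trans (Nat.le_add_left n N₁) (Nat.le_succ _)) tendsto_id
  have hev : ∀ᶠ n : ℕ in atTop, c₂ / 2 <
      cdist m (Sum.inr ((f : M ≃ₜ M) (A n))) (Sum.inl ((g ^ (N₁ + n + 1))⁻¹)) := by
    have h1 := hidx.eventually (hnear (c₂ / 2) (by linarith))
    refine h1.mono fun n hn => ?_
    have h4 : c₂ ≤ dist (Sum.inr ((f : M ≃ₜ M) (A n)) : Γ ⊕ M) (Sum.inr p) :=
      hc₂ _ ⟨A n, hA n, rfl⟩
    have h5 := dist_triangle (Sum.inr ((f : M ≃ₜ M) (A n)) : Γ ⊕ M)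
      (Sum.inl ((g ^ (N₁ + n + 1))⁻¹)) (Sum.inr p)
    rw [dist_comm (Sum.inl ((g ^ (N₁ + n + 1))⁻¹) : Γ ⊕ M) (Sum.inr p : Γ ⊕ M)] at h5
    rw [hcd] at hn ⊢
    linarith
  have hHtend : Tendsto (fun n => h (g ^ (N₁ + n + 1))) atTop atTop := by
    apply tendsto_atTop_mono' atTop ?_
      (tendsto_atTop_add_const_right atTop (-(κ + Bf + C₂)) htendβ)
    refine hev.mono fun n hn => ?_
    show σ (g ^ (N₁ + n + 1) * f) (A n) + -(κ + Bf + C₂) ≤ h (g ^ (N₁ + n + 1))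
    have h1 := hC₂ _ _ hn
    rw [abs_le] at h1
    have h2 := hcoc n
    linarith [h1.1]
  -- telescoping contradiction
  by_contra hcon
  push_neg at hcon
  set s := σ g p with hsdef
  set ε₃ := (-(2 * κ) - s) / 2 with hε₃def
  have hε₃pos : 0 < ε₃ := by rw [hε₃def]; linarith
  have hs2 : s = -(2 * κ) - 2 * ε₃ := by rw [hε₃def]; ring
  have hcc := hσ.coarse_cont g p ε₃ hε₃pos
  have horb : Tendsto (fun k : ℕ => ((g ^ k : Γ) : M ≃ₜ M) x₀) atTop (nhds p) :=
    tluoc_apply hgfwd hx₀p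
  have hK₀ev : ∀ᶠ k : ℕ in atTop, σ g (((g ^ k : Γ) : M ≃ₜ M) x₀) < -κ - ε₃ := by
    refine (horb.eventually hcc).mono fun k hk => ?_
    have h2 := abs_lt.mp hk
    rw [← hsdef] at h2
    linarith [h2.1, h2.2]
  obtain ⟨K₀, hK₀⟩ := Filter.eventually_atTop.mp hK₀ev
  have htel : ∀ j : ℕ, σ (g ^ (K₀ + j)) x₀ ≤ σ (g ^ K₀) x₀ - j * ε₃ := by
    intro j
    induction j with
    | zero => simp
    | succ j ih =>
      have h1 := hσ.cocycle g (g ^ (K₀ + j)) x₀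
      have h2 : g * g ^ (K₀ + j) = g ^ (K₀ + j + 1) := (pow_succ' g (K₀ + j)).symm
      rw [h2] at h1
      rw [abs_le] at h1
      have h3 := hK₀ (K₀ + j) (by omega)
      have h4 : K₀ + (j + 1) = K₀ + j + 1 := by omega
      rw [h4]
      push_cast
      linarith [h1.1, h1.2]
  have hx₀ne : (Sum.inr x₀ : Γ ⊕ M) ≠ Sum.inr p := fun hh => hx₀p (Sum.inr_injective hh)
  have hx₀d : 0 < dist (Sum.inr x₀ : Γ ⊕ M) (Sum.inr p) := dist_pos.mpr hx₀ne
  obtain ⟨C₃, hC₃pos, hC₃⟩ :=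
    hexp.2 (dist (Sum.inr x₀ : Γ ⊕ M) (Sum.inr p) / 2) (by linarith)
  have hc₃ev : ∀ᶠ n : ℕ in atTop, dist (Sum.inr x₀ : Γ ⊕ M) (Sum.inr p) / 2 <
      cdist m (Sum.inr x₀) (Sum.inl ((g ^ (N₁ + n + 1))⁻¹)) := by
    have h1 := hidx.eventually
      (hnear (dist (Sum.inr x₀ : Γ ⊕ M) (Sum.inr p) / 2) (by linarith))
    refine h1.mono fun n hn => ?_
    have h5 := dist_triangle (Sum.inr x₀ : Γ ⊕ M)
      (Sum.inl ((g ^ (N₁ + n + 1))⁻¹)) (Sum.inr p)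
    rw [dist_comm (Sum.inl ((g ^ (N₁ + n + 1))⁻¹) : Γ ⊕ M) (Sum.inr p : Γ ⊕ M)] at h5
    rw [hcd] at hn ⊢
    linarith
  have hσx₀ : Tendsto (fun n => σ (g ^ (N₁ + n + 1)) x₀) atTop atTop := by
    apply tendsto_atTop_mono' atTop ?_ (tendsto_atTop_add_const_right atTop (-C₃) hHtend)
    refine hc₃ev.mono fun n hn => ?_
    show h (g ^ (N₁ + n + 1)) + -C₃ ≤ σ (g ^ (N₁ + n + 1)) x₀
    have h1 := hC₃ _ _ hn
    rw [abs_le] at h1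
    linarith [h1.1]
  have hub : ∀ᶠ n : ℕ in atTop, σ (g ^ (N₁ + n + 1)) x₀ ≤ σ (g ^ K₀) x₀ := by
    refine Filter.eventually_atTop.mpr ⟨K₀, fun n hn => ?_⟩
    have h1 : N₁ + n + 1 = K₀ + (N₁ + n + 1 - K₀) := by omega
    rw [h1]
    have h2 := htel (N₁ + n + 1 - K₀)
    have h3 : (0 : ℝ) ≤ ((N₁ + n + 1 - K₀ : ℕ) : ℝ) := Nat.cast_nonneg _
    nlinarith [hε₃pos]
  obtain ⟨n, hn1, hn2⟩ := ((hσx₀.eventually_ge_atTop (σ (g ^ K₀) x₀ + 1)).and hub).exists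
  linarith

private lemma lox_fix_char {γ : Γ} {a b : M} (hlox : IsLoxodromicWith γ a b)
    {x : M} (hx : (γ : M ≃ₜ M) x = x) : x = a ∨ x = b := by
  rcases eq_or_ne x b with h | h
  · exact Or.inr h
  · left
    have h1 := tluoc_apply hlox.2.2.2.1 h
    have h2 : ∀ n : ℕ, ((γ ^ n : Γ) : M ≃ₜ M) x = x := fun n => fix_pow hx n
    have h3 : Tendsto (fun _ : ℕ => x) atTop (nhds a) := by simpa only [h2] using h1
    exact tendsto_nhds_unique
      (tendsto_const_nhds : Tendsto (fun _ : ℕ => x) atTop (nhds x)) h3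

private lemma two_ne (h3 : ∃ x y z : M, x ≠ y ∧ x ≠ z ∧ y ≠ z) (d : M) :
    ∃ y₁ y₂ : M, y₁ ≠ y₂ ∧ y₁ ≠ d ∧ y₂ ≠ d := by
  obtain ⟨x, y, z, hxy, hxz, hyz⟩ := h3
  rcases eq_or_ne x d with hxd | hxd
  · exact ⟨y, z, hyz, fun hh => hxy (hxd.trans hh.symm), fun hh => hxz (hxd.trans hh.symm)⟩
  · rcases eq_or_ne y d with hyd | hyd
    · exact ⟨x, z, hxz, hxd, fun hh => hyz (hyd.trans hh.symm)⟩
    · exact ⟨x, y, hxy, hxd, hyd⟩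

private lemma conjSeq_injective {L g : Γ} {u p : M}
    (hLox : IsLoxodromicWith L u p) (hup : u ≠ p)
    (hguniq : ∀ q : M, (g : M ≃ₜ M) q = q → q = p)
    (hginvp : ((g⁻¹ : Γ) : M ≃ₜ M) p = p) :
    Function.Injective fun m : ℕ => L ^ m * g * (L ^ m)⁻¹ := by
  have hgup : (g : M ≃ₜ M) u ≠ u := fun hh => hup (hguniq u hh)
  have hgup2 : (g : M ≃ₜ M) u ≠ p := by
    intro hh
    apply hup
    have h1 : ((g⁻¹ : Γ) : M ≃ₜ M) ((g : M ≃ₜ M) u) = u := by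
      rw [← coe_mul_apply, inv_mul_cancel, coe_one_apply]
    rw [hh, hginvp] at h1
    exact h1.symm
  have key : ∀ i j : ℕ, i < j → (L ^ i * g * (L ^ i)⁻¹ = L ^ j * g * (L ^ j)⁻¹) → False := by
    intro i j hij heq
    have happ : ((L ^ i * g * (L ^ i)⁻¹ : Γ) : M ≃ₜ M) u
        = ((L ^ j * g * (L ^ j)⁻¹ : Γ) : M ≃ₜ M) u := by rw [heq]
    have hfixi : (((L ^ i)⁻¹ : Γ) : M ≃ₜ M) u = u := fix_inv (fix_pow hLox.2.1 i)
    have hfixj : (((L ^ j)⁻¹ : Γ) : M ≃ₜ M) u = u := fix_inv (fix_pow hLox.2.1 j)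
    have h1 : ((L ^ i : Γ) : M ≃ₜ M) ((g : M ≃ₜ M) u)
        = ((L ^ j : Γ) : M ≃ₜ M) ((g : M ≃ₜ M) u) := by
      have e1 : ((L ^ i * g * (L ^ i)⁻¹ : Γ) : M ≃ₜ M) u
          = ((L ^ i : Γ) : M ≃ₜ M) ((g : M ≃ₜ M) u) := by
        rw [coe_mul_apply, coe_mul_apply, hfixi]
      have e2 : ((L ^ j * g * (L ^ j)⁻¹ : Γ) : M ≃ₜ M) u
          = ((L ^ j : Γ) : M ≃ₜ M) ((g : M ≃ₜ M) u) := by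
        rw [coe_mul_apply, coe_mul_apply, hfixj]
      rw [← e1, ← e2, happ]
    set d := j - i - 1 with hd
    have hj : (L : Γ) ^ j = L ^ i * L ^ (d + 1) := by
      rw [← pow_add]; congr 1; omega
    have h2 : ((L ^ i : Γ) : M ≃ₜ M) ((g : M ≃ₜ M) u)
        = ((L ^ i : Γ) : M ≃ₜ M) (((L ^ (d + 1) : Γ) : M ≃ₜ M) ((g : M ≃ₜ M) u)) := by
      rw [h1, hj, coe_mul_apply]
    have h3 : (g : M ≃ₜ M) u = ((L ^ (d + 1) : Γ) : M ≃ₜ M) ((g : M ≃ₜ M) u) :=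
      ((L ^ i : Γ) : M ≃ₜ M).injective h2
    rcases lox_fix_char (pow_lox hLox d) h3.symm with h4 | h4
    · exact hgup h4
    · exact hgup2 h4
  intro i j hij
  rcases Nat.lt_trichotomy i j with h | h | h
  · exact absurd hij fun hh => key i j h hh
  · exact h
  · exact absurd hij fun hh => key j i h hh.symm

private lemma tluoc_inv_limit {G : ℕ → Γ} {α β c d : M}
    (htl : TendstoLocallyUniformlyOnConst (fun j (x : M) => (G j : M ≃ₜ M) x) α {β}ᶜ)
    {ψ : ℕ → ℕ} (hψ : Tendsto ψ atTop atTop)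
    (htl' : TendstoLocallyUniformlyOnConst
      (fun i (x : M) => (((G (ψ i))⁻¹ : Γ) : M ≃ₜ M) x) c {d}ᶜ)
    (h3 : ∃ x y z : M, x ≠ y ∧ x ≠ z ∧ y ≠ z) :
    c = β := by
  by_contra hcβ
  have key : ∀ y : M, y ≠ d → y = α := by
    intro y hyd
    have h1 : Tendsto (fun i => (((G (ψ i))⁻¹ : Γ) : M ≃ₜ M) y) atTop (nhds c) :=
      tluoc_apply htl' hyd
    have hev : ∀ᶠ i in atTop, (((G (ψ i))⁻¹ : Γ) : M ≃ₜ M) y ≠ β :=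
      h1 (isOpen_compl_singleton.mem_nhds (Set.mem_compl_singleton_iff.mpr hcβ))
    have h2 : Tendsto (fun i => (G (ψ i) : M ≃ₜ M) ((((G (ψ i))⁻¹ : Γ) : M ≃ₜ M) y))
        atTop (nhds α) :=
      tluoc_eval (tluoc_comp htl hψ) h1 hcβ hev
    have h3' : ∀ i, (G (ψ i) : M ≃ₜ M) ((((G (ψ i))⁻¹ : Γ) : M ≃ₜ M) y) = y := fun i => by
      rw [← coe_mul_apply, mul_inv_cancel, coe_one_apply]
    have h4 : Tendsto (fun _ : ℕ => y) atTop (nhds α) := by simpa only [h3'] using h2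
    exact tendsto_nhds_unique
      (tendsto_const_nhds : Tendsto (fun _ : ℕ => y) atTop (nhds y)) h4
  obtain ⟨y₁, y₂, hy12, hy1d, hy2d⟩ := two_ne h3 d
  exact hy12 ((key y₁ hy1d).trans (key y₂ hy2d).symm)

private lemma conj_dichotomy {L g : Γ} {u p : M}
    (hLox : IsLoxodromicWith L u p) (hup : u ≠ p)
    (hgup : (g : M ≃ₜ M) u ≠ p)
    (hGFP : ∀ f : Γ, (f : M ≃ₜ M) p = p)
    {e : ℕ → ℕ} (he : Tendsto e atTop atTop)
    {α β : M}
    (htl : TendstoLocallyUniformlyOnConst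
      (fun j (x : M) => ((L ^ e j * g * (L ^ e j)⁻¹ : Γ) : M ≃ₜ M) x) α {β}ᶜ) :
    (α = u ∧ β = p) ∨ (α = p ∧ β = u) := by
  have hcu : Tendsto (fun j => ((L ^ e j * g * (L ^ e j)⁻¹ : Γ) : M ≃ₜ M) u)
      atTop (nhds u) := by
    have hbase : Tendsto (fun n : ℕ => ((L ^ n : Γ) : M ≃ₜ M) ((g : M ≃ₜ M) u))
        atTop (nhds u) := tluoc_apply hLox.2.2.2.1 hgup
    have hcomp := hbase.comp he
    have hfun : (fun j => ((L ^ e j * g * (L ^ e j)⁻¹ : Γ) : M ≃ₜ M) u)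
        = fun j => ((L ^ e j : Γ) : M ≃ₜ M) ((g : M ≃ₜ M) u) := by
      funext j
      rw [coe_mul_apply, coe_mul_apply, fix_inv (fix_pow hLox.2.1 (e j))]
    rw [hfun]
    exact hcomp
  rcases eq_or_ne β p with hβp | hβp
  · left
    refine ⟨?_, hβp⟩
    have h1 := tluoc_apply htl (show u ≠ β from hβp ▸ hup)
    exact tendsto_nhds_unique h1 hcu
  · right
    have hαp : α = p := by
      have h1 := tluoc_apply htl (show p ≠ β from fun hh => hβp hh.symm)
      have h2 : ∀ j, ((L ^ e j * g * (L ^ e j)⁻¹ : Γ) : M ≃ₜ M) p = p := fun j => hGFP _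
      have h3 : Tendsto (fun _ : ℕ => p) atTop (nhds α) := by simpa only [h2] using h1
      exact (tendsto_nhds_unique
        (tendsto_const_nhds : Tendsto (fun _ : ℕ => p) atTop (nhds p)) h3).symm
    refine ⟨hαp, ?_⟩
    by_contra hβu
    have h1 := tluoc_apply htl (show u ≠ β from fun hh => hβu hh.symm)
    have h2 : α = u := tendsto_nhds_unique h1 hcu
    exact hup (hαp ▸ h2 : p = u).symm

private lemma conj_kill {L g' : Γ} {u p : M}
    (hLox : IsLoxodromicWith L u p) (hup : u ≠ p)
    (hg'fwd : TendstoLocallyUniformlyOnConst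
      (fun n (x : M) => ((g' ^ n : Γ) : M ≃ₜ M) x) p {p}ᶜ)
    {e : ℕ → ℕ}
    (htl : TendstoLocallyUniformlyOnConst
      (fun j (x : M) => ((L ^ e j * g' * (L ^ e j)⁻¹ : Γ) : M ≃ₜ M) x) u {p}ᶜ) :
    False := by
  classical
  set η := dist p u / 2 with hηdef
  have hpu : 0 < dist p u := dist_pos.mpr (Ne.symm hup)
  have hηpos : 0 < η := by rw [hηdef]; linarith
  have horb : Tendsto (fun k : ℕ => ((g' ^ k : Γ) : M ≃ₜ M) u) atTop (nhds p) :=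
    tluoc_apply hg'fwd hup
  have hex : ∀ m : ℕ, ∃ k : ℕ,
      η ≤ dist (((L ^ m : Γ) : M ≃ₜ M) (((g' ^ (k + 1) : Γ) : M ≃ₜ M) u)) u := by
    intro m
    have h1 : Tendsto (fun k : ℕ => ((L ^ m : Γ) : M ≃ₜ M) (((g' ^ k : Γ) : M ≃ₜ M) u))
        atTop (nhds (((L ^ m : Γ) : M ≃ₜ M) p)) :=
      (((L ^ m : Γ) : M ≃ₜ M).continuous.tendsto p).comp horb
    rw [fix_pow hLox.2.2.1 m] at h1
    have h3 : Tendsto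
        (fun k : ℕ => dist (((L ^ m : Γ) : M ≃ₜ M) (((g' ^ k : Γ) : M ≃ₜ M) u)) u)
        atTop (nhds (dist p u)) := h1.dist tendsto_const_nhds
    have h4 : ∀ᶠ k : ℕ in atTop,
        η ≤ dist (((L ^ m : Γ) : M ≃ₜ M) (((g' ^ k : Γ) : M ≃ₜ M) u)) u :=
      h3.eventually (eventually_ge_nhds (by rw [hηdef]; linarith))
    obtain ⟨k, hk⟩ := (h4.and (Filter.eventually_ge_atTop 1)).exists
    refine ⟨k - 1, ?_⟩
    have hk1 : k - 1 + 1 = k := by omega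
    rw [hk1]
    exact hk.1
  let t : ℕ → ℕ := fun m => Nat.find (hex m)
  have htspec : ∀ m : ℕ,
      η ≤ dist (((L ^ m : Γ) : M ≃ₜ M) (((g' ^ (t m + 1) : Γ) : M ≃ₜ M) u)) u :=
    fun m => Nat.find_spec (hex m)
  have htmin : ∀ m : ℕ, ∀ k < t m,
      ¬ η ≤ dist (((L ^ m : Γ) : M ≃ₜ M) (((g' ^ (k + 1) : Γ) : M ≃ₜ M) u)) u :=
    fun m k hk => Nat.find_min (hex m) hk
  set s : ℕ → M := fun j => ((L ^ e j : Γ) : M ≃ₜ M) (((g' ^ t (e j) : Γ) : M ≃ₜ M) u)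
    with hsdef
  have hsball : ∀ j, s j ∈ Metric.closedBall u η := by
    intro j
    rcases Nat.eq_zero_or_pos (t (e j)) with h0 | hpos
    · have hse : s j = u := by
        rw [hsdef]
        simp only [h0, pow_zero]
        rw [coe_one_apply, fix_pow hLox.2.1]
      rw [hse]
      exact Metric.mem_closedBall_self (le_of_lt hηpos)
    · have h1 := htmin (e j) (t (e j) - 1) (by omega)
      push_neg at h1
      have h2 : t (e j) - 1 + 1 = t (e j) := by omega
      rw [h2] at h1
      rw [Metric.mem_closedBall]
      exact le_of_lt h1
  have hsp : ∀ j, s j ≠ p := by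
    intro j hh
    have h1 := hsball j
    rw [hh, Metric.mem_closedBall] at h1
    rw [hηdef] at h1
    linarith
  obtain ⟨sS, hsSmem, ρ, hρmono, hρtend⟩ :=
    Metric.isClosed_closedBall.isCompact.tendsto_subseq hsball
  have hsSp : sS ≠ p := by
    intro hh
    rw [hh, Metric.mem_closedBall, hηdef] at hsSmem
    linarith
  have hkey : ∀ j, ((L ^ e j * g' * (L ^ e j)⁻¹ : Γ) : M ≃ₜ M) (s j)
      = ((L ^ e j : Γ) : M ≃ₜ M) (((g' ^ (t (e j) + 1) : Γ) : M ≃ₜ M) u) := by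
    intro j
    have hinv : (((L ^ e j)⁻¹ : Γ) : M ≃ₜ M) (s j)
        = ((g' ^ t (e j) : Γ) : M ≃ₜ M) u := by
      rw [hsdef, ← coe_mul_apply, inv_mul_cancel, coe_one_apply]
    have hstep : (g' : M ≃ₜ M) (((g' ^ t (e j) : Γ) : M ≃ₜ M) u)
        = ((g' ^ (t (e j) + 1) : Γ) : M ≃ₜ M) u := by
      rw [← coe_mul_apply, ← pow_succ']
    rw [coe_mul_apply, coe_mul_apply, hinv, hstep]
  have h1 : Tendsto
      (fun i => ((L ^ e (ρ i) * g' * (L ^ e (ρ i))⁻¹ : Γ) : M ≃ₜ M) (s (ρ i)))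
      atTop (nhds u) :=
    tluoc_eval (tluoc_comp htl hρmono.tendsto_atTop) hρtend hsSp
      (Filter.Eventually.of_forall fun i => hsp (ρ i))
  rw [Metric.tendsto_nhds] at h1
  obtain ⟨i, hi⟩ := (h1 η hηpos).exists
  have h2 := htspec (e (ρ i))
  rw [← hkey (ρ i)] at h2
  linarith

private lemma global_fixed_point_absurd (hΓ : IsConvergenceGroup Γ) (hNE : IsNonElementary Γ)
    {g : Γ} {p : M} (hpar : IsParabolicWith g p)
    (hca : ∀ f : Γ, (f : M ≃ₜ M) p = p) : False := by
  obtain ⟨hgfix, hguniq, hgfwd, hgbwd⟩ := hpar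
  obtain ⟨x, y, z, hxy, hxz, hyz⟩ := exists_three hNE
  have h3pts : ∃ x y z : M, x ≠ y ∧ x ≠ z ∧ y ≠ z := ⟨x, y, z, hxy, hxz, hyz⟩
  have ha₁ : ∃ a₁ ∈ limitSet Γ, a₁ ≠ p := by
    have h1 : (1 : ℕ∞) < (limitSet Γ).encard := lt_of_lt_of_le (by norm_num) hNE
    obtain ⟨a, b, ha, hb, hab⟩ := Set.one_lt_encard_iff.mp h1
    rcases eq_or_ne a p with hap | hap
    · exact ⟨b, hb, fun hh => hab (hap.trans hh.symm)⟩
    · exact ⟨a, ha, hap⟩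
  obtain ⟨a₁, ha₁mem, ha₁p⟩ := ha₁
  obtain ⟨b₁, δ, hδ0⟩ := ha₁mem
  have hb₁ : b₁ = p := by
    by_contra hb₁p
    have h1 := tluoc_apply hδ0 (show p ≠ b₁ from fun hh => hb₁p hh.symm)
    have h2 : ∀ n, ((δ n : Γ) : M ≃ₜ M) p = p := fun n => hca (δ n)
    have h3 : Tendsto (fun _ : ℕ => p) atTop (nhds a₁) := by simpa only [h2] using h1
    exact ha₁p (tendsto_nhds_unique
      (tendsto_const_nhds : Tendsto (fun _ : ℕ => p) atTop (nhds p)) h3).symm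
  rw [hb₁] at hδ0
  have hz₀ex : ∃ z₀ : M, z₀ ≠ a₁ ∧ z₀ ≠ p := by
    obtain ⟨y₁, y₂, h12, h1p, h2p⟩ := two_ne h3pts p
    rcases eq_or_ne y₁ a₁ with h | h
    · exact ⟨y₂, fun hh => h12 (h.trans hh.symm), h2p⟩
    · exact ⟨y₁, h, h1p⟩
  obtain ⟨z₀, hz₀a, hz₀p⟩ := hz₀ex
  have hpa : 0 < dist a₁ p := dist_pos.mpr ha₁p
  have hz₀ad : 0 < dist z₀ a₁ := dist_pos.mpr hz₀a
  have hz₀pd : 0 < dist z₀ p := dist_pos.mpr hz₀p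
  set r := min (min (dist a₁ p / 3) (dist z₀ a₁)) (dist z₀ p) / 2 with hrdef
  have hrpos : 0 < r := by
    rw [hrdef]
    have := lt_min (lt_min (by linarith : (0:ℝ) < dist a₁ p / 3) hz₀ad) hz₀pd
    linarith
  have h2r : 2 * r ≤ dist a₁ p / 3 := by
    rw [hrdef]
    have h4 : min (min (dist a₁ p / 3) (dist z₀ a₁)) (dist z₀ p) ≤ dist a₁ p / 3 :=
      le_trans (min_le_left _ _) (min_le_left _ _)
    linarith
  have hz₀r1 : z₀ ∉ Metric.closedBall p r := by
    rw [Metric.mem_closedBall]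
    push_neg
    have h4 : min (min (dist a₁ p / 3) (dist z₀ a₁)) (dist z₀ p) ≤ dist z₀ p :=
      min_le_right _ _
    rw [hrdef]; linarith
  have hz₀r2 : z₀ ∉ Metric.closedBall a₁ r := by
    rw [Metric.mem_closedBall]
    push_neg
    have h4 : min (min (dist a₁ p / 3) (dist z₀ a₁)) (dist z₀ p) ≤ dist z₀ a₁ :=
      le_trans (min_le_left _ _) (min_le_right _ _)
    rw [hrdef]; linarith
  have hdisjB : ∀ x' ∈ Metric.closedBall p r, x' ∉ Metric.closedBall a₁ r := by
    intro x' h1 h2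
    rw [Metric.mem_closedBall] at h1 h2
    have h5 := dist_triangle a₁ x' p
    rw [dist_comm a₁ x'] at h5
    linarith
  have hKU := tluoc_unif hδ0 (Metric.isOpen_ball.isClosed_compl.isCompact)
    (fun x' hx' => fun hh => hx' (by rw [hh]; exact Metric.mem_ball_self hrpos))
    (Metric.ball_mem_nhds a₁ hrpos)
  obtain ⟨N, hN⟩ := hKU.exists
  obtain ⟨u, humem, v, hvmem, hloxδ⟩ := ping_pong hΓ Metric.isClosed_closedBall
    Metric.isClosed_closedBall hdisjB ⟨z₀, hz₀r1, hz₀r2⟩ (fun y' hy' => by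
      have h1 : y' ∈ (Metric.ball p r)ᶜ := fun hc => hy' (Metric.ball_subset_closedBall hc)
      exact Metric.ball_subset_closedBall (hN y' h1))
  have hpnotB₂ : p ∉ Metric.closedBall a₁ r :=
    hdisjB p (Metric.mem_closedBall_self (le_of_lt hrpos))
  have hvp : v = p := by
    rcases lox_fix_char hloxδ (hca (δ N)) with h | h
    · exact absurd (h ▸ humem) hpnotB₂
    · exact h.symm
  rw [hvp] at hloxδ
  have hup : u ≠ p := fun hh => hpnotB₂ (hh ▸ humem)
  have hgup : (g : M ≃ₜ M) u ≠ p := by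
    intro hh
    apply hup
    have h1 : ((g⁻¹ : Γ) : M ≃ₜ M) ((g : M ≃ₜ M) u) = u := by
      rw [← coe_mul_apply, inv_mul_cancel, coe_one_apply]
    rw [hh, fix_inv hgfix] at h1
    exact h1.symm
  have hginvup : ((g⁻¹ : Γ) : M ≃ₜ M) u ≠ p := by
    intro hh
    apply hup
    have h1 : (g : M ≃ₜ M) (((g⁻¹ : Γ) : M ≃ₜ M) u) = u := by
      rw [← coe_mul_apply, mul_inv_cancel, coe_one_apply]
    rw [hh, hgfix] at h1
    exact h1.symm
  have hinjT := conjSeq_injective hloxδ hup hguniq (fix_inv hgfix)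
  obtain ⟨α, β, φ, hφ, htl⟩ := hΓ (fun m => δ N ^ m * g * (δ N ^ m)⁻¹) hinjT
  rcases conj_dichotomy hloxδ hup hgup hca hφ.tendsto_atTop htl with ⟨hαu, hβp⟩ | ⟨hαp, hβu⟩
  · rw [hαu, hβp] at htl
    exact conj_kill hloxδ hup hgfwd htl
  · have hinj2 : Function.Injective fun i : ℕ => (δ N ^ φ i * g * (δ N ^ φ i)⁻¹)⁻¹ := by
      intro i j hij
      exact hφ.injective (hinjT (inv_injective hij))
    obtain ⟨c, d, ψ, hψ, htl'⟩ := hΓ (fun i => (δ N ^ φ i * g * (δ N ^ φ i)⁻¹)⁻¹) hinj2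
    have hc : c = β := tluoc_inv_limit htl hψ.tendsto_atTop htl' h3pts
    have htl'' : TendstoLocallyUniformlyOnConst
        (fun i (x' : M) => ((δ N ^ φ (ψ i) * g⁻¹ * (δ N ^ φ (ψ i))⁻¹ : Γ) : M ≃ₜ M) x')
        c {d}ᶜ := by
      have hfun2 : (fun i (x' : M) =>
            (((δ N ^ φ (ψ i) * g * (δ N ^ φ (ψ i))⁻¹)⁻¹ : Γ) : M ≃ₜ M) x')
          = fun i (x' : M) =>
            ((δ N ^ φ (ψ i) * g⁻¹ * (δ N ^ φ (ψ i))⁻¹ : Γ) : M ≃ₜ M) x' := by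
        funext i x'
        have hfe : (δ N ^ φ (ψ i) * g * (δ N ^ φ (ψ i))⁻¹)⁻¹
            = δ N ^ φ (ψ i) * g⁻¹ * (δ N ^ φ (ψ i))⁻¹ := by group
        rw [hfe]
      rw [← hfun2]
      exact htl'
    rcases conj_dichotomy hloxδ hup hginvup hca ((hφ.comp hψ).tendsto_atTop) htl''
      with ⟨hcu, hdp⟩ | ⟨hcp, hdu⟩
    · rw [hcu, hdp] at htl''
      exact conj_kill hloxδ hup hgbwd htl''
    · rw [hβu] at hc
      rw [hcp] at hc
      exact hup hc.symm

end CocyclePeriodsAux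

/-- Proposition 3.3 (3),(4): bounds on the periods of loxodromic and
parabolic elements for an expanding `κ`-coarse-cocycle. -/
theorem cocycle_periods
    {M : Type*} [MetricSpace M] [CompactSpace M]
    {Γ : Subgroup (M ≃ₜ M)} (hΓ : IsConvergenceGroup Γ) (hNE : IsNonElementary Γ)
    (m : MetricSpace (Γ ⊕ M)) (hm : IsCompatibleMetric Γ m)
    (σ : Γ → M → ℝ) (κ : ℝ) (hσ : IsCoarseCocycle σ κ)
    (h : Γ → ℝ) (hexp : IsExpandingWith m σ h) :
    -- loxodromic elements
    (∀ (γ : Γ) (p q : M), IsLoxodromicWith γ p q →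
      (-κ + Filter.limsup (fun n : ℕ => h (γ ^ n) / (n : ℝ)) atTop ≤ σ γ p ∧
       σ γ p ≤ κ + Filter.liminf (fun n : ℕ => h (γ ^ n) / (n : ℝ)) atTop ∧
       -κ < σ γ p)) ∧
    -- parabolic elements
    (∀ (γ : Γ) (p : M), IsParabolicWith γ p →
      -(2 * κ) ≤ σ γ p ∧ σ γ p ≤ 4 * κ) := by
  constructor
  · rintro γ p q hlox
    obtain ⟨x, y, z, hxy, hxz, hyz⟩ := exists_three hNE
    have hx₀ : ∃ x₀ : M, x₀ ≠ p ∧ x₀ ≠ q := by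
      rcases eq_or_ne x p with hxp | hxp
      · rcases eq_or_ne y q with hyq | hyq
        · exact ⟨z, fun hh => hxz (hxp.trans hh.symm), fun hh => hyz (hyq.trans hh.symm)⟩
        · exact ⟨y, fun hh => hxy (hxp.trans hh.symm), hyq⟩
      · rcases eq_or_ne x q with hxq | hxq
        · rcases eq_or_ne y p with hyp | hyp
          · exact ⟨z, fun hh => hyz (hyp.trans hh.symm), fun hh => hxz (hxq.trans hh.symm)⟩
          · exact ⟨y, hyp, fun hh => hxy (hxq.trans hh.symm)⟩
        · exact ⟨x, hxp, hxq⟩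
    obtain ⟨x₀, hx₀p, hx₀q⟩ := hx₀
    have hinjpow := pow_injective hlox hx₀p hx₀q
    obtain ⟨ε, hε, hfar⟩ := far_from_source m hm hlox hx₀p hx₀q ⟨x, y, z, hxy, hxz, hyz⟩
    obtain ⟨C, hC, hCexp⟩ := hexp.2 ε hε
    set s := σ γ p with hs
    have hκ := hσ.nonneg
    have hhb : ∀ᶠ n : ℕ in atTop, |σ (γ ^ n) p - h (γ ^ n)| ≤ C :=
      hfar.mono fun n hn => hCexp _ _ hn
    have hcb := cocycle_pow_bound hσ hlox.2.1
    have hup : ∀ᶠ n : ℕ in atTop, h (γ ^ n) / (n : ℝ) ≤ s + κ + C / (n : ℝ) := by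
      filter_upwards [hhb, Filter.eventually_ge_atTop 1] with n hn h1
      obtain ⟨k, rfl⟩ : ∃ k, n = k + 1 := ⟨n - 1, by omega⟩
      have hb1 := hcb k
      rw [abs_le] at hn hb1
      have hNpos : (0 : ℝ) < (k : ℝ) + 1 := by positivity
      have hcast : ((k + 1 : ℕ) : ℝ) = (k : ℝ) + 1 := by push_cast; ring
      rw [hcast, div_le_iff₀ hNpos]
      have hexpand : (s + κ + C / ((k : ℝ) + 1)) * ((k : ℝ) + 1)
          = ((k : ℝ) + 1) * s + ((k : ℝ) + 1) * κ + C := by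
        field_simp
      rw [hexpand]
      nlinarith [hn.1, hn.2, hb1.1, hb1.2, hκ]
    have hlo : ∀ᶠ n : ℕ in atTop, s - κ - C / (n : ℝ) ≤ h (γ ^ n) / (n : ℝ) := by
      filter_upwards [hhb, Filter.eventually_ge_atTop 1] with n hn h1
      obtain ⟨k, rfl⟩ : ∃ k, n = k + 1 := ⟨n - 1, by omega⟩
      have hb1 := hcb k
      rw [abs_le] at hn hb1
      have hNpos : (0 : ℝ) < (k : ℝ) + 1 := by positivity
      have hcast : ((k + 1 : ℕ) : ℝ) = (k : ℝ) + 1 := by push_cast; ring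
      rw [hcast, le_div_iff₀ hNpos]
      have hexpand : (s - κ - C / ((k : ℝ) + 1)) * ((k : ℝ) + 1)
          = ((k : ℝ) + 1) * s - ((k : ℝ) + 1) * κ - C := by
        field_simp
      rw [hexpand]
      nlinarith [hn.1, hn.2, hb1.1, hb1.2, hκ]
    have hupc : ∀ᶠ n : ℕ in atTop, h (γ ^ n) / (n : ℝ) ≤ s + κ + C := by
      filter_upwards [hup, Filter.eventually_ge_atTop 1] with n h1 h2
      have h3 : C / (n : ℝ) ≤ C := by
        apply div_le_self (le_of_lt hC)
        exact_mod_cast h2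
      linarith
    have hloc : ∀ᶠ n : ℕ in atTop, s - κ - C ≤ h (γ ^ n) / (n : ℝ) := by
      filter_upwards [hlo, Filter.eventually_ge_atTop 1] with n h1 h2
      have h3 : C / (n : ℝ) ≤ C := by
        apply div_le_self (le_of_lt hC)
        exact_mod_cast h2
      linarith
    have htub : Tendsto (fun n : ℕ => s + κ + C / (n : ℝ)) atTop (nhds (s + κ)) := by
      have h0 := tendsto_const_div_atTop_nhds_zero_nat C
      have := (tendsto_const_nhds : Tendsto (fun _ : ℕ => s + κ) atTop (nhds (s + κ))).add h0
      simpa using this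
    have htlb : Tendsto (fun n : ℕ => s - κ - C / (n : ℝ)) atTop (nhds (s - κ)) := by
      have h0 := tendsto_const_div_atTop_nhds_zero_nat C
      have := (tendsto_const_nhds : Tendsto (fun _ : ℕ => s - κ) atTop (nhds (s - κ))).sub h0
      simpa using this
    have hlimsup : Filter.limsup (fun n : ℕ => h (γ ^ n) / (n : ℝ)) atTop ≤ s + κ := by
      have hcb1 : Filter.IsCoboundedUnder (· ≤ ·) atTop (fun n : ℕ => h (γ ^ n) / (n : ℝ)) :=
        (Filter.isBoundedUnder_of_eventually_ge hloc).isCoboundedUnder_le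
      have hres := Filter.limsup_le_limsup hup hcb1 htub.isBoundedUnder_le
      rwa [htub.limsup_eq] at hres
    have hliminf : s - κ ≤ Filter.liminf (fun n : ℕ => h (γ ^ n) / (n : ℝ)) atTop := by
      have hcb2 : Filter.IsCoboundedUnder (· ≥ ·) atTop (fun n : ℕ => h (γ ^ n) / (n : ℝ)) :=
        (Filter.isBoundedUnder_of_eventually_le hupc).isCoboundedUnder_ge
      have hres := Filter.liminf_le_liminf hlo htlb.isBoundedUnder_ge hcb2
      rwa [htlb.liminf_eq] at hres
    have hstrict : -κ < s := by
      by_contra hle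
      push_neg at hle
      have hloxpow := pow_lox hlox
      have hinj1 : Function.Injective fun n : ℕ => γ ^ (n + 1) := by
        intro a b hab
        have := hinjpow hab
        omega
      have hsep : ∃ c > 0, ∀ᶠ _n : ℕ in atTop, c ≤ cdist m (Sum.inr q) (Sum.inr p) := by
        refine ⟨cdist m (Sum.inr q) (Sum.inr p), ?_,
          Filter.Eventually.of_forall fun _ => le_refl _⟩
        letI := m
        have hne : (Sum.inr q : Γ ⊕ M) ≠ Sum.inr p :=
          fun hh => hlox.1 (Sum.inr_injective hh).symm
        exact dist_pos.mpr hne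
      have htendσ := hexp.1 (fun n => γ ^ (n + 1)) (fun _ => p) (fun _ => q) hinj1 hloxpow hsep
      have hub2 : ∀ n : ℕ, σ (γ ^ (n + 1)) p ≤ -κ := by
        intro n
        have hb2 := (abs_le.mp (hcb n)).2
        have hmul : ((n : ℝ) + 1) * s ≤ ((n : ℝ) + 1) * (-κ) :=
          mul_le_mul_of_nonneg_left hle (by positivity)
        linarith
      obtain ⟨n, hn⟩ := (htendσ.eventually_ge_atTop (-κ + 1)).exists
      linarith [hub2 n]
    exact ⟨by linarith [hlimsup], by linarith [hliminf], hstrict⟩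
  · rintro g p hpar
    by_cases hca : ∃ f : Γ, (f : M ≃ₜ M) p ≠ p
    · obtain ⟨f, hf⟩ := hca
      have hlow := parabolic_lower hΓ hNE m hm hσ hexp hpar hf
      have hlow' := parabolic_lower hΓ hNE m hm hσ hexp (parabolic_inv hpar) hf
      have h1p : |σ (1 : Γ) p| ≤ κ := by
        have h1 := hσ.cocycle 1 1 p
        rw [one_mul] at h1
        rw [show ((1 : Γ) : M ≃ₜ M) p = p from rfl] at h1
        rw [abs_le] at h1 ⊢
        constructor <;> linarith [h1.1, h1.2]
      have h2p := hσ.cocycle g⁻¹ g p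
      rw [inv_mul_cancel] at h2p
      rw [hpar.1] at h2p
      rw [abs_le] at h2p
      rw [abs_le] at h1p
      exact ⟨hlow, by linarith [h2p.1, h2p.2, h1p.1, h1p.2, hlow']⟩
    · push_neg at hca
      exfalso
      exact global_fixed_point_absurd hΓ hNE hpar hca
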